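/- arXiv:2005.08678 — 6 statements merged into one kernel-verified Lean document; each statement's English description precedes it below -/
import Mathlib

section
/- Let Λ ⊆ ℝ and α > 0. Then the upper average circular density of Λ satisfies D⁺_circ(Λ) = limsup_{r→∞} (2α/(πr²)) ∫₀^r #(((Λ∖{0}) × αℤ) ∩ B_t(0)) dt/t, where B_t(0) denotes the open Euclidean disk of radius t centered at the origin in ℝ² and # denotes cardinality. -/
/-!
For `λ ≠ 0` the points of `{λ} × αℤ` in `B_t(0)` are the `αk` with `|αk| < √(t² − λ²)`; there are
`2⌈√(t² − λ²)/α⌉ − 1` of them, which is `(2/α)√(t² − λ²)` up to an error `≤ 1` that only occurs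
for `|λ| < t`. Summing over `λ`, the count times `α/2` is the chord sum up to `(α/2)·n(t)` with
`n(t) = #((Λ ∖ {0}) ∩ (−t, t))`, and the point `λ = 0` changes the chord sum by at most `t`.
Both errors are negligible in the average when the density is finite: each point counted by `n(t)`
contributes at least `t` to the chord sum at `2t`, which is `O(t²)`, so `n(t) = O(t)` for large `t`;
near `0`, `n` vanishes because the finitely many points of `Λ ∖ {0}` in a bounded interval stay
away from `0`. When the density is infinite, the bound `chord ≤ α · count` suffices.
-/

open MeasureTheory Filter Set
open scoped ENNReal

/-- The chord sum `∑_{λ ∈ Λ ∩ [−t,t]} √(t² − λ²)`, valued in `ℝ≥0∞`. -/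
noncomputable def circChordSum (Λ : Set ℝ) (t : ℝ) : ℝ≥0∞ :=
  ∑' lam : (Λ ∩ Set.Icc (-t) t : Set ℝ), ENNReal.ofReal (Real.sqrt (t ^ 2 - (lam : ℝ) ^ 2))

/-- Upper average circular density
`D⁺_circ(Λ) = limsup_{r→∞} (4/(πr²)) ∫₀^r (∑_{λ ∈ Λ∩[−t,t]} √(t²−λ²)) dt/t`
(automatically `∞` if `Λ` is uncountable, since the inner sum is then eventually infinite). -/
noncomputable def circDensity (Λ : Set ℝ) : ℝ≥0∞ :=
  Filter.limsup (fun r : ℝ =>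
    ENNReal.ofReal (4 / (Real.pi * r ^ 2)) *
      ∫⁻ t in Set.Ioc (0 : ℝ) r, circChordSum Λ t / ENNReal.ofReal t) Filter.atTop

open Real Topology

lemma encard_setOf_abs_intCast_lt {b : ℝ} (hb : 0 < b) :
    ({k : ℤ | |(k : ℝ)| < b}.encard : ℝ≥0∞) = ENNReal.ofReal (2 * ⌈b⌉ - 1) := by
  have h_eq : {k : ℤ | |(k : ℝ)| < b} = ↑(Finset.Ioo (-⌈b⌉) ⌈b⌉) := by
    ext k
    simp only [mem_ofPred_eq, Finset.coe_Ioo, mem_Ioo, abs_lt, neg_lt, Int.lt_ceil,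
      Int.cast_neg]
  have h_pos : 0 < ⌈b⌉ := Int.ceil_pos.mpr hb
  rw [h_eq, encard_coe_eq_coe_finsetCard, Int.card_Ioo, ENat.toENNReal_coe,
    ← ENNReal.ofReal_natCast, ← Int.cast_natCast, Int.toNat_of_nonneg (by omega)]
  push_cast
  ring_nf

lemma mul_ceil_div_mem_Ico {α : ℝ} (hα : 0 < α) (s : ℝ) : α * ⌈s / α⌉ ∈ Ico s (s + α) := by
  constructor
  · rw [← div_le_iff₀' hα]
    exact Int.le_ceil _
  · rw [← lt_div_iff₀' hα, add_div, div_self hα.ne']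
    exact Int.ceil_lt_add_one _

def chordLatticePoints (α x t : ℝ) : Set ℝ :=
  {y | (∃ k : ℤ, y = α * k) ∧ x ^ 2 + y ^ 2 < t ^ 2}

lemma chordLatticePoints_eq_image {α : ℝ} (hα : 0 < α) (x t : ℝ) :
    chordLatticePoints α x t =
      (fun k : ℤ => α * k) '' {k : ℤ | |(k : ℝ)| < √(t ^ 2 - x ^ 2) / α} := by
  have key : ∀ k : ℤ, x ^ 2 + (α * k) ^ 2 < t ^ 2 ↔ |(k : ℝ)| < √(t ^ 2 - x ^ 2) / α := by
    intro k
    rw [lt_div_iff₀ hα, ← abs_of_pos hα, ← abs_mul, mul_comm, Real.lt_sqrt (abs_nonneg _),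
      sq_abs, abs_of_pos hα]
    constructor <;> intro h <;> linarith
  ext y
  simp only [chordLatticePoints, mem_ofPred_eq, mem_image]
  constructor
  · rintro ⟨⟨k, rfl⟩, h⟩
    exact ⟨k, (key k).mp h, rfl⟩
  · rintro ⟨k, hk, rfl⟩
    exact ⟨⟨k, rfl⟩, (key k).mpr hk⟩

lemma encard_chordLatticePoints {α : ℝ} (hα : 0 < α) (x t : ℝ) :
    (chordLatticePoints α x t).encard =
      {k : ℤ | |(k : ℝ)| < √(t ^ 2 - x ^ 2) / α}.encard := by
  rw [chordLatticePoints_eq_image hα]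
  exact ((mul_right_injective₀ hα.ne').comp Int.cast_injective).encard_image _

section ChordBounds

variable {α x t : ℝ}

lemma ofReal_mul_encard_chordLatticePoints (hα : 0 < α) (h : x ^ 2 < t ^ 2) :
    ENNReal.ofReal (α / 2) * (chordLatticePoints α x t).encard =
      ENNReal.ofReal (α * ⌈√(t ^ 2 - x ^ 2) / α⌉ - α / 2) := by
  have hb : 0 < √(t ^ 2 - x ^ 2) / α := div_pos (Real.sqrt_pos.mpr (by linarith)) hα
  rw [encard_chordLatticePoints hα, encard_setOf_abs_intCast_lt hb,
    ← ENNReal.ofReal_mul (by positivity)]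
  ring_nf

lemma chordLatticePoints_eq_empty (h : t ^ 2 ≤ x ^ 2) : chordLatticePoints α x t = ∅ :=
  eq_empty_of_forall_notMem fun y hy => by nlinarith [hy.2, sq_nonneg y]

lemma indicator_Ioo_eq_one (ht : 0 < t) (h : x ^ 2 < t ^ 2) :
    (Ioo (-t) t).indicator (1 : ℝ → ℝ≥0∞) x = 1 :=
  indicator_of_mem (show x ∈ Ioo (-t) t from abs_lt.mp (abs_lt_of_sq_lt_sq h ht.le)) _

lemma ofReal_sqrt_le_mul_encard_add (hα : 0 < α) (ht : 0 < t) :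
    ENNReal.ofReal √(t ^ 2 - x ^ 2) ≤
      ENNReal.ofReal (α / 2) * (chordLatticePoints α x t).encard +
        ENNReal.ofReal (α / 2) * (Ioo (-t) t).indicator 1 x := by
  rcases lt_or_ge (x ^ 2) (t ^ 2) with h | h
  · rw [ofReal_mul_encard_chordLatticePoints hα h, indicator_Ioo_eq_one ht h, mul_one]
    refine (ENNReal.ofReal_le_ofReal ?_).trans ENNReal.ofReal_add_le
    linarith [(mul_ceil_div_mem_Ico hα √(t ^ 2 - x ^ 2)).1]
  · simp [Real.sqrt_eq_zero_of_nonpos (sub_nonpos.mpr h)]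

lemma mul_encard_le_ofReal_sqrt_add (hα : 0 < α) (ht : 0 < t) :
    ENNReal.ofReal (α / 2) * (chordLatticePoints α x t).encard ≤
      ENNReal.ofReal √(t ^ 2 - x ^ 2) +
        ENNReal.ofReal (α / 2) * (Ioo (-t) t).indicator 1 x := by
  rcases lt_or_ge (x ^ 2) (t ^ 2) with h | h
  · rw [ofReal_mul_encard_chordLatticePoints hα h, indicator_Ioo_eq_one ht h, mul_one,
      ← ENNReal.ofReal_add (Real.sqrt_nonneg _) (by positivity)]
    exact ENNReal.ofReal_le_ofReal <| by
      linarith [(mul_ceil_div_mem_Ico hα √(t ^ 2 - x ^ 2)).2]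
  · simp [chordLatticePoints_eq_empty h]

lemma ofReal_sqrt_le_two_mul_encard (hα : 0 < α) :
    ENNReal.ofReal √(t ^ 2 - x ^ 2) ≤
      2 * (ENNReal.ofReal (α / 2) * (chordLatticePoints α x t).encard) := by
  rcases lt_or_ge (x ^ 2) (t ^ 2) with h | h
  · have h_one : 1 ≤ ⌈√(t ^ 2 - x ^ 2) / α⌉ :=
      Int.one_le_ceil_iff.mpr (div_pos (Real.sqrt_pos.mpr (by linarith)) hα)
    have h_one' : α ≤ α * ⌈√(t ^ 2 - x ^ 2) / α⌉ :=
      le_mul_of_one_le_right hα.le (by exact_mod_cast h_one)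
    rw [ofReal_mul_encard_chordLatticePoints hα h, ← ENNReal.ofReal_ofNat 2,
      ← ENNReal.ofReal_mul zero_le_two]
    exact ENNReal.ofReal_le_ofReal <| by
      linarith [(mul_ceil_div_mem_Ico hα √(t ^ 2 - x ^ 2)).1]
  · simp [Real.sqrt_eq_zero_of_nonpos (sub_nonpos.mpr h)]

lemma ofReal_mul_indicator_le_ofReal_sqrt :
    ENNReal.ofReal t * (Ioo (-t) t).indicator 1 x ≤
      ENNReal.ofReal √((2 * t) ^ 2 - x ^ 2) := by
  by_cases hx : x ∈ Ioo (-t) t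
  · rw [indicator_of_mem hx, Pi.one_apply, mul_one]
    refine ENNReal.ofReal_le_ofReal (Real.le_sqrt_of_sq_le ?_)
    nlinarith [sq_lt_sq' hx.1 hx.2]
  · simp [indicator_of_notMem hx]

end ChordBounds

/-- Since `Real.sqrt` sends negative numbers to `0`, only the points `x ∈ S` with `|x| < t`
contribute; unlike in `circChordSum`, the index set does not move with `t`. -/
noncomputable def chordSum (S : Set ℝ) (t : ℝ) : ℝ≥0∞ :=
  ∑' x : S, ENNReal.ofReal √(t ^ 2 - (x : ℝ) ^ 2)

noncomputable def chordLatticeCount (S : Set ℝ) (α t : ℝ) : ℝ≥0∞ :=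
  ∑' x : S, ((chordLatticePoints α x t).encard : ℝ≥0∞)

lemma tsum_indicator_one_eq_encard {X : Type*} (S T : Set X) :
    ∑' x : S, T.indicator (1 : X → ℝ≥0∞) x = (S ∩ T).encard := by
  rw [← ENNReal.tsum_set_one, tsum_subtype, tsum_subtype (S ∩ T) fun _ => 1,
    indicator_indicator]
  rfl

lemma circChordSum_eq_chordSum (Λ : Set ℝ) {t : ℝ} (ht : 0 ≤ t) :
    circChordSum Λ t = chordSum Λ t := by
  set f := fun x : ℝ => ENNReal.ofReal √(t ^ 2 - x ^ 2)
  have h_supp : Function.support f ⊆ Icc (-t) t := by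
    intro x hx
    have : x ^ 2 < t ^ 2 := by
      by_contra! h
      simp [f, Real.sqrt_eq_zero_of_nonpos (sub_nonpos.mpr h)] at hx
    exact Ioo_subset_Icc_self (abs_lt.mp (abs_lt_of_sq_lt_sq this ht))
  rw [circChordSum, chordSum, tsum_subtype _ f, tsum_subtype Λ f, ← indicator_indicator,
    indicator_eq_self.mpr h_supp]

lemma chordSum_mono_set {S T : Set ℝ} (h : S ⊆ T) (t : ℝ) : chordSum S t ≤ chordSum T t :=
  ENNReal.tsum_mono_subtype (fun x => ENNReal.ofReal √(t ^ 2 - x ^ 2)) h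

lemma chordSum_monotoneOn (S : Set ℝ) : MonotoneOn (chordSum S) (Ioi 0) :=
  fun s hs t _ hst => ENNReal.tsum_le_tsum fun x => ENNReal.ofReal_le_ofReal <|
    Real.sqrt_le_sqrt (by nlinarith [mem_Ioi.mp hs])

lemma chordSum_diff_zero_le_circChordSum (Λ : Set ℝ) {t : ℝ} (ht : 0 ≤ t) :
    chordSum (Λ \ {0}) t ≤ circChordSum Λ t :=
  circChordSum_eq_chordSum Λ ht ▸ chordSum_mono_set sdiff_subset t

lemma circChordSum_le_chordSum_diff_zero_add (Λ : Set ℝ) {t : ℝ} (ht : 0 ≤ t) :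
    circChordSum Λ t ≤ chordSum (Λ \ {0}) t + ENNReal.ofReal t := by
  calc circChordSum Λ t = chordSum Λ t := circChordSum_eq_chordSum Λ ht
    _ ≤ chordSum ((Λ \ {0}) ∪ {0}) t := chordSum_mono_set (by simp) t
    _ ≤ chordSum (Λ \ {0}) t + chordSum {0} t :=
      ENNReal.tsum_union_le (fun x => ENNReal.ofReal √(t ^ 2 - x ^ 2)) _ _
    _ = chordSum (Λ \ {0}) t + ENNReal.ofReal t := by
      simp [chordSum, Real.sqrt_sq ht]

section ChordSumBounds

variable (S : Set ℝ) {α t : ℝ}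

lemma chordSum_le_mul_chordLatticeCount_add (hα : 0 < α) (ht : 0 < t) :
    chordSum S t ≤ ENNReal.ofReal (α / 2) * chordLatticeCount S α t +
      ENNReal.ofReal (α / 2) * (S ∩ Ioo (-t) t).encard := by
  rw [chordLatticeCount, ← tsum_indicator_one_eq_encard, ← ENNReal.tsum_mul_left,
    ← ENNReal.tsum_mul_left, ← ENNReal.tsum_add]
  exact ENNReal.tsum_le_tsum fun x => ofReal_sqrt_le_mul_encard_add hα ht

lemma mul_chordLatticeCount_le_chordSum_add (hα : 0 < α) (ht : 0 < t) :
    ENNReal.ofReal (α / 2) * chordLatticeCount S α t ≤ chordSum S t +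
      ENNReal.ofReal (α / 2) * (S ∩ Ioo (-t) t).encard := by
  rw [chordLatticeCount, ← tsum_indicator_one_eq_encard, ← ENNReal.tsum_mul_left,
    ← ENNReal.tsum_mul_left, chordSum, ← ENNReal.tsum_add]
  exact ENNReal.tsum_le_tsum fun x => mul_encard_le_ofReal_sqrt_add hα ht

lemma chordSum_le_two_mul_chordLatticeCount (hα : 0 < α) :
    chordSum S t ≤ 2 * (ENNReal.ofReal (α / 2) * chordLatticeCount S α t) := by
  rw [chordLatticeCount, ← ENNReal.tsum_mul_left, ← ENNReal.tsum_mul_left]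
  exact ENNReal.tsum_le_tsum fun x => ofReal_sqrt_le_two_mul_encard hα

lemma ofReal_mul_encard_le_chordSum :
    ENNReal.ofReal t * (S ∩ Ioo (-t) t).encard ≤ chordSum S (2 * t) := by
  rw [← tsum_indicator_one_eq_encard, ← ENNReal.tsum_mul_left]
  exact ENNReal.tsum_le_tsum fun x => ofReal_mul_indicator_le_ofReal_sqrt

end ChordSumBounds

lemma encard_setOf_fst_mem_snd_mem {X Y : Type*} (S : Set X) (V : X → Set Y) :
    ({p : X × Y | p.1 ∈ S ∧ p.2 ∈ V p.1}.encard : ℝ≥0∞) =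
      ∑' x : S, ((V x).encard : ℝ≥0∞) := by
  let e : {p : X × Y | p.1 ∈ S ∧ p.2 ∈ V p.1} ≃ Σ x : S, V x :=
    { toFun := fun p => ⟨⟨p.1.1, p.2.1⟩, ⟨p.1.2, p.2.2⟩⟩
      invFun := fun q => ⟨(q.1, q.2), q.1.2, q.2.2⟩
      left_inv := fun _ => rfl
      right_inv := fun _ => rfl }
  simp_rw [← ENNReal.tsum_set_one]
  rw [← e.symm.tsum_eq, ENNReal.tsum_sigma']

lemma encard_latticePoints_eq_chordLatticeCount (Λ : Set ℝ) (α t : ℝ) :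
    ({p : ℝ × ℝ | p.1 ∈ Λ ∧ p.1 ≠ 0 ∧ (∃ k : ℤ, p.2 = α * k) ∧
      p.1 ^ 2 + p.2 ^ 2 < t ^ 2}.encard : ℝ≥0∞) = chordLatticeCount (Λ \ {0}) α t := by
  rw [chordLatticeCount,
    ← encard_setOf_fst_mem_snd_mem (Λ \ {0}) fun x => chordLatticePoints α x t]
  simp only [chordLatticePoints, Set.mem_sdiff, mem_singleton_iff, mem_ofPred_eq, and_assoc]

noncomputable def radialAverage (f : ℝ → ℝ≥0∞) (r : ℝ) : ℝ≥0∞ :=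
  ENNReal.ofReal (4 / (π * r ^ 2)) * ∫⁻ t in Ioc 0 r, f t / ENNReal.ofReal t

section RadialAverage

variable {f g h : ℝ → ℝ≥0∞}

lemma radialAverage_const_mul {c : ℝ≥0∞} (hc : c ≠ ⊤) (f : ℝ → ℝ≥0∞) (r : ℝ) :
    radialAverage (fun t => c * f t) r = c * radialAverage f r := by
  simp_rw [radialAverage, mul_div_assoc, lintegral_const_mul' _ _ hc]
  ring

lemma radialAverage_le_add (hh : Measurable h) (hfgh : ∀ t, 0 < t → f t ≤ g t + h t) (r : ℝ) :
    radialAverage f r ≤ radialAverage g r + radialAverage h r := by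
  unfold radialAverage
  rw [← mul_add,
    ← lintegral_add_right _ (by fun_prop : Measurable fun t => h t / ENNReal.ofReal t)]
  refine mul_le_mul_right (setLIntegral_mono' measurableSet_Ioc fun t ht => ?_) _
  rw [← ENNReal.add_div]
  exact ENNReal.div_le_div_right (hfgh t ht.1) _

lemma tendsto_radialAverage_zero {K : ℝ≥0∞} (hK : K ≠ ⊤)
    (hf : ∀ t, 0 < t → f t ≤ K * ENNReal.ofReal t) :
    Tendsto (radialAverage f) atTop (𝓝 0) := by
  have h_bound : ∀ r, 0 < r → radialAverage f r ≤ K * ENNReal.ofReal (4 / π * r⁻¹) := by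
    intro r hr
    calc radialAverage f r ≤ ENNReal.ofReal (4 / (π * r ^ 2)) * ∫⁻ _ in Ioc 0 r, K := by
          refine mul_le_mul_right (setLIntegral_mono measurable_const fun t ht => ?_) _
          exact ENNReal.div_le_of_le_mul (hf t ht.1)
      _ = K * ENNReal.ofReal (4 / π * r⁻¹) := by
          rw [setLIntegral_const, Real.volume_Ioc, sub_zero, mul_left_comm,
            ← ENNReal.ofReal_mul (by positivity)]
          congr 2
          field_simp
  have h_lim : Tendsto (fun r => K * ENNReal.ofReal (4 / π * r⁻¹)) atTop (𝓝 0) := by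
    simpa using ENNReal.Tendsto.const_mul
      (ENNReal.tendsto_ofReal (tendsto_inv_atTop_zero.const_mul (4 / π))) (Or.inr hK)
  exact tendsto_of_tendsto_of_tendsto_of_le_of_le' tendsto_const_nhds h_lim
    (Eventually.of_forall fun _ => zero_le) ((eventually_gt_atTop 0).mono h_bound)

lemma le_mul_radialAverage (hg : MonotoneOn g (Ioi 0)) (hgf : ∀ t, 0 < t → g t ≤ f t)
    {u : ℝ} (hu : 0 < u) : g u ≤ ENNReal.ofReal (2 * π * u ^ 2) * radialAverage f (2 * u) := by
  have h_int : g u * ENNReal.ofReal (u / (2 * u)) ≤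
      ∫⁻ t in Ioc 0 (2 * u), f t / ENNReal.ofReal t := by
    calc g u * ENNReal.ofReal (u / (2 * u))
        = ∫⁻ _ in Ioc u (2 * u), g u / ENNReal.ofReal (2 * u) := by
          rw [setLIntegral_const, Real.volume_Ioc, ENNReal.ofReal_div_of_pos (by positivity),
            show 2 * u - u = u by ring, div_eq_mul_inv, div_eq_mul_inv]
          ring
      _ ≤ ∫⁻ t in Ioc u (2 * u), f t / ENNReal.ofReal t := by
          refine setLIntegral_mono' measurableSet_Ioc fun t ht => ?_
          gcongr
          · exact (hg (mem_Ioi.mpr hu) (mem_Ioi.mpr (hu.trans ht.1)) ht.1.le).trans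
              (hgf t (hu.trans ht.1))
          · exact ht.2
      _ ≤ ∫⁻ t in Ioc 0 (2 * u), f t / ENNReal.ofReal t :=
          lintegral_mono_set (Ioc_subset_Ioc_left hu.le)
  have h_one : 2 * π * u ^ 2 * (4 / (π * (2 * u) ^ 2)) * (u / (2 * u)) = 1 := by
    field_simp
    ring
  calc g u
        = ENNReal.ofReal (2 * π * u ^ 2 * (4 / (π * (2 * u) ^ 2)) * (u / (2 * u))) * g u := by
        rw [h_one, ENNReal.ofReal_one, one_mul]
    _ = ENNReal.ofReal (2 * π * u ^ 2) *
          (ENNReal.ofReal (4 / (π * (2 * u) ^ 2)) * (g u * ENNReal.ofReal (u / (2 * u)))) := by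
        rw [ENNReal.ofReal_mul (by positivity), ENNReal.ofReal_mul (by positivity)]
        ring
    _ ≤ ENNReal.ofReal (2 * π * u ^ 2) * radialAverage f (2 * u) := by
        rw [radialAverage]
        gcongr

end RadialAverage

lemma measurable_encard_inter_Ioo (S : Set ℝ) :
    Measurable fun t : ℝ => ((S ∩ Ioo (-t) t).encard : ℝ≥0∞) :=
  Monotone.measurable fun _ _ hst => ENat.toENNReal_le.mpr <|
    encard_mono <| inter_subset_inter_right S <| Ioo_subset_Ioo (neg_le_neg hst) hst

section PointCount

variable {S : Set ℝ}

lemma exists_encard_inter_Ioo_le_mul_of_finite (h0 : 0 ∉ S) {R : ℝ}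
    (hR : (S ∩ Ioo (-R) R).Finite) :
    ∃ K ≠ ⊤, ∀ t ≤ R, ((S ∩ Ioo (-t) t).encard : ℝ≥0∞) ≤ K * ENNReal.ofReal t := by
  set F := S ∩ Ioo (-R) R
  obtain ⟨ε, hε, h_ball⟩ := Metric.isOpen_iff.mp hR.isClosed.isOpen_compl 0
    fun h => h0 (inter_subset_left h)
  refine ⟨F.encard / ENNReal.ofReal ε, ENNReal.div_ne_top (by simpa using hR.encard_lt_top.ne)
    (by simpa using hε), fun t htR => ?_⟩
  have h_sub : S ∩ Ioo (-t) t ⊆ F :=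
    inter_subset_inter_right S (Ioo_subset_Ioo (neg_le_neg htR) htR)
  rcases le_or_gt t ε with htε | htε
  · have h_empty : S ∩ Ioo (-t) t = ∅ := eq_empty_of_forall_notMem fun x hx =>
      h_ball (by simpa [abs_lt] using ⟨hx.2.1.trans_le' (neg_le_neg htε),
        hx.2.2.trans_le htε⟩) (h_sub hx)
    simp [h_empty]
  · calc ((S ∩ Ioo (-t) t).encard : ℝ≥0∞) ≤ F.encard :=
          ENat.toENNReal_le.mpr (encard_mono h_sub)
      _ = F.encard / ENNReal.ofReal ε * ENNReal.ofReal ε :=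
        (ENNReal.div_mul_cancel (by simpa using hε) ENNReal.ofReal_ne_top).symm
      _ ≤ F.encard / ENNReal.ofReal ε * ENNReal.ofReal t := by gcongr

lemma encard_inter_Ioo_le_of_chordSum_le {t : ℝ} (ht : 0 < t) {K : ℝ≥0∞}
    (h : chordSum S (2 * t) ≤ K * ENNReal.ofReal t ^ 2) :
    ((S ∩ Ioo (-t) t).encard : ℝ≥0∞) ≤ K * ENNReal.ofReal t := by
  rw [← ENNReal.mul_le_mul_iff_right (by simpa using ht) ENNReal.ofReal_ne_top]
  calc ENNReal.ofReal t * (S ∩ Ioo (-t) t).encard ≤ chordSum S (2 * t) :=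
        ofReal_mul_encard_le_chordSum S
    _ ≤ K * ENNReal.ofReal t ^ 2 := h
    _ = ENNReal.ofReal t * (K * ENNReal.ofReal t) := by ring

lemma exists_encard_inter_Ioo_le_mul (h0 : 0 ∉ S) {f : ℝ → ℝ≥0∞}
    (hSf : ∀ t, 0 < t → chordSum S t ≤ f t) (hf : limsup (radialAverage f) atTop ≠ ⊤) :
    ∃ K ≠ ⊤, ∀ t, 0 < t → ((S ∩ Ioo (-t) t).encard : ℝ≥0∞) ≤ K * ENNReal.ofReal t := by
  set L := limsup (radialAverage f) atTop + 1
  obtain ⟨R, hR⟩ := eventually_atTop.mp <| (eventually_lt_of_limsup_lt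
    (ENNReal.lt_add_right hf one_ne_zero)).mono fun _ => le_of_lt
  set R₀ := max R 1
  have h_large : ∀ t, R₀ ≤ t →
      ((S ∩ Ioo (-t) t).encard : ℝ≥0∞) ≤ ENNReal.ofReal (8 * π) * L * ENNReal.ofReal t := by
    intro t ht
    have ht0 : 0 < t := lt_of_lt_of_le one_pos (le_sup_right.trans ht)
    refine encard_inter_Ioo_le_of_chordSum_le ht0 ?_
    calc chordSum S (2 * t)
        ≤ ENNReal.ofReal (2 * π * (2 * t) ^ 2) * radialAverage f (2 * (2 * t)) :=
          le_mul_radialAverage (chordSum_monotoneOn S) hSf (by positivity)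
      _ ≤ ENNReal.ofReal (2 * π * (2 * t) ^ 2) * L := by
          gcongr
          exact hR _ (by linarith [le_sup_left.trans ht])
      _ = ENNReal.ofReal (8 * π) * L * ENNReal.ofReal t ^ 2 := by
          rw [← ENNReal.ofReal_pow ht0.le, mul_right_comm (ENNReal.ofReal _) L,
            ← ENNReal.ofReal_mul (by positivity)]
          ring_nf
  have h_fin : (S ∩ Ioo (-R₀) R₀).Finite := by
    refine encard_ne_top_iff.mp fun h_top => ?_
    have := h_large R₀ le_rfl
    simp [h_top, ENNReal.mul_eq_top, L, hf] at this
  obtain ⟨K₀, hK₀, h_small⟩ := exists_encard_inter_Ioo_le_mul_of_finite h0 h_fin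
  refine ⟨ENNReal.ofReal (8 * π) * L + K₀, ?_, fun t _ => ?_⟩
  · simp [L, ENNReal.mul_eq_top, hf, hK₀]
  rcases le_total t R₀ with ht | ht
  · exact (h_small t ht).trans (by gcongr; exact le_add_self)
  · exact (h_large t ht).trans (by gcongr; exact le_self_add)

end PointCount

lemma ENNReal.limsup_le_limsup_of_le_add {ι : Type*} {l : Filter ι} {u v e : ι → ℝ≥0∞}
    (h : ∀ᶠ i in l, u i ≤ v i + e i) (he : Tendsto e l (𝓝 0)) : limsup u l ≤ limsup v l :=
  (limsup_le_limsup h).trans (ENNReal.limsup_add_of_right_tendsto_zero he v).le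

lemma circDensity_eq_limsup_radialAverage (Λ : Set ℝ) :
    circDensity Λ = limsup (radialAverage (circChordSum Λ)) atTop :=
  rfl

lemma limsup_radialAverage_eq_of_le_add {f g n : ℝ → ℝ≥0∞} (hn : Measurable n)
    (h_fg : ∀ t, 0 < t → f t ≤ g t + (n t + ENNReal.ofReal t))
    (h_gf : ∀ t, 0 < t → g t ≤ f t + n t)
    (h_two : ∀ t, 0 < t → f t ≤ 2 * g t + ENNReal.ofReal t)
    (h_growth : limsup (radialAverage f) atTop ≠ ⊤ →
      ∃ K ≠ ⊤, ∀ t, 0 < t → n t ≤ K * ENNReal.ofReal t) :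
    limsup (radialAverage f) atTop = limsup (radialAverage g) atTop := by
  have h_id : Tendsto (radialAverage (ENNReal.ofReal ·)) atTop (𝓝 0) :=
    tendsto_radialAverage_zero ENNReal.one_ne_top fun t _ => by rw [one_mul]
  by_cases hf : limsup (radialAverage f) atTop = ⊤
  · have h_le : limsup (radialAverage f) atTop ≤ 2 * limsup (radialAverage g) atTop := by
      rw [← ENNReal.limsup_const_mul_of_ne_top ENNReal.ofNat_ne_top]
      refine ENNReal.limsup_le_limsup_of_le_add (Eventually.of_forall fun r => ?_) h_id
      rw [← radialAverage_const_mul ENNReal.ofNat_ne_top]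
      exact radialAverage_le_add ENNReal.measurable_ofReal h_two r
    rw [hf, top_le_iff, ENNReal.mul_eq_top] at h_le
    rw [hf, (h_le.resolve_right (by simp)).2]
  · obtain ⟨K, hK, hnK⟩ := h_growth hf
    have h_err : Tendsto (radialAverage fun t => n t + ENNReal.ofReal t) atTop (𝓝 0) :=
      tendsto_radialAverage_zero (ENNReal.add_ne_top.mpr ⟨hK, ENNReal.one_ne_top⟩)
        fun t ht => by rw [add_mul, one_mul]; gcongr; exact hnK t ht
    exact le_antisymm
      (ENNReal.limsup_le_limsup_of_le_add (Eventually.of_forall <|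
        radialAverage_le_add (hn.add ENNReal.measurable_ofReal) h_fg) h_err)
      (ENNReal.limsup_le_limsup_of_le_add (Eventually.of_forall <|
        radialAverage_le_add hn h_gf) (tendsto_radialAverage_zero hK hnK))

lemma count_average_eq_radialAverage (Λ : Set ℝ) (α r : ℝ) :
    ENNReal.ofReal (2 * α / (π * r ^ 2)) *
      ∫⁻ t in Ioc 0 r, ({p : ℝ × ℝ | p.1 ∈ Λ ∧ p.1 ≠ 0 ∧ (∃ k : ℤ, p.2 = α * k) ∧
        p.1 ^ 2 + p.2 ^ 2 < t ^ 2}.encard : ℝ≥0∞) / ENNReal.ofReal t =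
      radialAverage (fun t => ENNReal.ofReal (α / 2) * chordLatticeCount (Λ \ {0}) α t) r := by
  rw [radialAverage_const_mul ENNReal.ofReal_ne_top, radialAverage, ← mul_assoc,
    ← ENNReal.ofReal_mul' (by positivity)]
  simp_rw [encard_latticePoints_eq_chordLatticeCount]
  ring_nf

/-- Alternative description of the upper average circular density: for any `α > 0`,
`D⁺_circ(Λ) = limsup_{r→∞} (2α/(πr²)) ∫₀^r #(((Λ∖{0}) × αℤ) ∩ B_t(0)) dt/t`. -/
theorem circDensity_eq_limsup_count (Λ : Set ℝ) (α : ℝ) (hα : 0 < α) :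
    circDensity Λ =
      Filter.limsup (fun r : ℝ =>
        ENNReal.ofReal (2 * α / (Real.pi * r ^ 2)) *
          ∫⁻ t in Set.Ioc (0 : ℝ) r,
            (({p : ℝ × ℝ | p.1 ∈ Λ ∧ p.1 ≠ 0 ∧ (∃ k : ℤ, p.2 = α * k) ∧
                p.1 ^ 2 + p.2 ^ 2 < t ^ 2}.encard : ℝ≥0∞)) / ENNReal.ofReal t)
        Filter.atTop := by
  simp_rw [count_average_eq_radialAverage, circDensity_eq_limsup_radialAverage]
  set S := Λ \ {0}
  set c := ENNReal.ofReal (α / 2)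
  refine limsup_radialAverage_eq_of_le_add (n := fun t => c * (S ∩ Ioo (-t) t).encard)
    ((measurable_encard_inter_Ioo S).const_mul c) (fun t ht => ?_) (fun t ht => ?_)
    (fun t ht => ?_) fun hf => ?_
  · refine (circChordSum_le_chordSum_diff_zero_add Λ ht.le).trans ?_
    rw [← add_assoc]
    gcongr
    exact chordSum_le_mul_chordLatticeCount_add S hα ht
  · refine (mul_chordLatticeCount_le_chordSum_add S hα ht).trans ?_
    gcongr
    exact chordSum_diff_zero_le_circChordSum Λ ht.le
  · refine (circChordSum_le_chordSum_diff_zero_add Λ ht.le).trans ?_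
    gcongr
    exact chordSum_le_two_mul_chordLatticeCount S hα
  · obtain ⟨K, hK, hnK⟩ := exists_encard_inter_Ioo_le_mul (S := S) (by simp [S])
      (fun t ht => chordSum_diff_zero_le_circChordSum Λ ht.le) hf
    refine ⟨c * K, ENNReal.mul_ne_top ENNReal.ofReal_ne_top hK, fun t ht => ?_⟩
    rw [mul_assoc]
    gcongr
    exact hnK t ht
end

section
/- For every set Λ ⊆ ℝ, the upper average circular density dominates the lower Beurling density: D⁺_circ(Λ) ≥ D⁻(Λ). -/
open MeasureTheory Filter Set
open scoped ENNReal

/-- Lower Beurling density `D⁻(Λ) = liminf_{r→∞} inf_x #(Λ∩[x−r,x+r])/(2r)`. -/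
noncomputable def lowerBeurlingDensity (Λ : Set ℝ) : ℝ≥0∞ :=
  Filter.liminf (fun r : ℝ =>
    ⨅ x : ℝ, ((Λ ∩ Set.Icc (x - r) (x + r)).encard : ℝ≥0∞) / ENNReal.ofReal (2 * r))
    Filter.atTop

/-!
Write `√(t² − λ²)` as half the length of `{x : x² + λ² ≤ t²}`. Exchanging sum and integral
(legitimate because `Λ ∩ [−t, t]` is countable unless the chord sum `S(t)` is infinite) gives
`2 S(t) ≥ ∫_{−t}^{t} #(Λ ∩ [−√(t² − x²), √(t² − x²)]) dx`. For `d < D⁻(Λ)` there is `r₀` such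
that every centred interval `[−w, w]` holds at least `2d (w − r₀)` points, so
`S(t) ≥ d (π t² / 2 − 2 r₀ t)`: the error is linear in `t` while the main term is quadratic,
so the average `4/(πR²) ∫₀^R S(t) dt/t` is at least `d − O(1/R)`.
-/

theorem integral_sqrt_sq_sub_sq {t : ℝ} (ht : 0 ≤ t) :
    ∫ x in -t..t, √(t ^ 2 - x ^ 2) = Real.pi / 2 * t ^ 2 := by
  rcases ht.eq_or_lt with rfl | ht
  · simp
  have hscale : ∀ x, √(t ^ 2 - x ^ 2) = t * √(1 - (x / t) ^ 2) := fun x => by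
    rw [← Real.sqrt_sq ht.le, ← Real.sqrt_mul (sq_nonneg t), Real.sqrt_sq ht.le]
    congr 1
    field_simp
  simp_rw [hscale]
  rw [intervalIntegral.integral_const_mul,
    intervalIntegral.integral_comp_div (fun y => √(1 - y ^ 2)) ht.ne',
    neg_div, div_self ht.ne', integral_sqrt_one_sub_sq, smul_eq_mul]
  ring

theorem mem_Icc_neg_sqrt_iff {x y : ℝ} (hy : 0 ≤ y) : x ∈ Icc (-√y) √y ↔ x ^ 2 ≤ y :=
  (Real.sq_le hy).symm

theorem ofReal_integral_le_lintegral_ofReal {α : Type*} [MeasurableSpace α] {μ : Measure α}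
    {f : α → ℝ} (hf : Integrable f μ) :
    ENNReal.ofReal (∫ a, f a ∂μ) ≤ ∫⁻ a, ENNReal.ofReal (f a) ∂μ :=
  calc ENNReal.ofReal (∫ a, f a ∂μ) ≤ ENNReal.ofReal (∫ a, max (f a) 0 ∂μ) :=
        ENNReal.ofReal_le_ofReal (integral_mono hf hf.pos_part fun _ => le_max_left _ _)
    _ = ∫⁻ a, ENNReal.ofReal (max (f a) 0) ∂μ :=
        ofReal_integral_eq_lintegral_ofReal hf.pos_part (ae_of_all _ fun _ => le_max_right _ _)
    _ = ∫⁻ a, ENNReal.ofReal (f a) ∂μ := by simp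

theorem lintegral_encard_inter_setOf_mem {α X : Type*} [MeasurableSpace X] (μ : Measure X)
    {s : Set α} (hs : s.Countable) {A : α → Set X} (hA : ∀ i, MeasurableSet (A i)) :
    ∫⁻ x, (s ∩ {i | x ∈ A i}).encard ∂μ = ∑' i : s, μ (A i) := by
  have : Countable s := hs.to_subtype
  have hcount : ∀ x, ((s ∩ {i | x ∈ A i}).encard : ℝ≥0∞) = ∑' i : s, (A i).indicator 1 x := by
    intro x
    rw [← ENNReal.tsum_set_one, tsum_subtype _ fun _ => (1 : ℝ≥0∞),
      tsum_subtype s fun i => (A i).indicator 1 x, ← indicator_indicator]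
    congr 1
  simp_rw [hcount]
  rw [lintegral_tsum (f := fun (i : s) x => (A i).indicator 1 x)
    fun i => (measurable_one.indicator (hA i)).aemeasurable]
  simp [lintegral_indicator_one (hA _)]

theorem countable_of_circChordSum_ne_top {Λ : Set ℝ} {t : ℝ} (h : circChordSum Λ t ≠ ∞) :
    (Λ ∩ Icc (-t) t).Countable := by
  have hsupp := Summable.countable_support_ennreal h
  refine ((hsupp.image Subtype.val).union ((countable_singleton (-t)).insert t)).mono ?_
  rintro x ⟨hxΛ, hxt⟩
  rcases eq_or_ne x t with rfl | hx_ne_t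
  · simp
  rcases eq_or_ne x (-t) with rfl | hx_ne_neg
  · simp
  refine Or.inl ⟨⟨x, hxΛ, hxt⟩, ?_, rfl⟩
  have : x ^ 2 < t ^ 2 :=
    sq_lt_sq' (lt_of_le_of_ne hxt.1 hx_ne_neg.symm) (lt_of_le_of_ne hxt.2 hx_ne_t)
  simpa [Function.mem_support] using this

theorem lintegral_encard_Icc_sqrt_le_two_mul_circChordSum (Λ : Set ℝ) (t : ℝ) :
    ∫⁻ x in Icc (-t) t, (Λ ∩ Icc (-√(t ^ 2 - x ^ 2)) √(t ^ 2 - x ^ 2)).encard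
      ≤ 2 * circChordSum Λ t := by
  rcases eq_or_ne (circChordSum Λ t) ∞ with htop | htop
  · simp [htop]
  set s := Λ ∩ Icc (-t) t
  set w : ℝ → ℝ := fun y => √(t ^ 2 - y ^ 2)
  have hslice : ∀ x ∈ Icc (-t) t, s ∩ {y | x ∈ Icc (-w y) (w y)} = Λ ∩ Icc (-w x) (w x) := by
    intro x hx
    have hx2 : x ^ 2 ≤ t ^ 2 := sq_le_sq' hx.1 hx.2
    ext y
    simp only [s, w, mem_inter_iff, mem_ofPred_eq, and_assoc]
    refine and_congr_right fun _ => ?_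
    rw [mem_Icc_neg_sqrt_iff (sub_nonneg.2 hx2)]
    constructor
    · rintro ⟨hy, hxy⟩
      rw [mem_Icc_neg_sqrt_iff (sub_nonneg.2 (sq_le_sq' hy.1 hy.2))] at hxy
      linarith
    · intro hxy
      have hy : y ^ 2 ≤ t ^ 2 := by nlinarith [sq_nonneg x]
      refine ⟨abs_le_of_sq_le_sq' hy (by linarith [hx.1, hx.2]), ?_⟩
      rw [mem_Icc_neg_sqrt_iff (sub_nonneg.2 hy)]
      linarith
  calc ∫⁻ x in Icc (-t) t, (Λ ∩ Icc (-w x) (w x)).encard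
      = ∫⁻ x in Icc (-t) t, (s ∩ {y | x ∈ Icc (-w y) (w y)}).encard :=
        setLIntegral_congr_fun measurableSet_Icc fun x hx => by rw [hslice x hx]
    _ ≤ ∫⁻ x, (s ∩ {y | x ∈ Icc (-w y) (w y)}).encard := setLIntegral_le_lintegral _ _
    _ = ∑' y : s, volume (Icc (-w y) (w y)) :=
        lintegral_encard_inter_setOf_mem _ (countable_of_circChordSum_ne_top htop)
          fun _ => measurableSet_Icc
    _ = 2 * circChordSum Λ t := by
        rw [circChordSum, ← ENNReal.tsum_mul_left]
        congr 1
        ext y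
        rw [Real.volume_Icc, ← ENNReal.ofReal_ofNat 2, ← ENNReal.ofReal_mul zero_le_two]
        congr 1
        ring

theorem ofReal_le_circChordSum {Λ : Set ℝ} {d r₀ t : ℝ} (ht : 0 ≤ t)
    (hcount : ∀ w ≥ 0, ENNReal.ofReal (2 * d * (w - r₀)) ≤ (Λ ∩ Icc (-w) w).encard) :
    ENNReal.ofReal (d * (Real.pi / 2 * t ^ 2 - 2 * r₀ * t)) ≤ circChordSum Λ t := by
  have hcont : Continuous fun x : ℝ => 2 * d * (√(t ^ 2 - x ^ 2) - r₀) := by fun_prop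
  have hint : ∫ x in Icc (-t) t, 2 * d * (√(t ^ 2 - x ^ 2) - r₀)
      = 2 * (d * (Real.pi / 2 * t ^ 2 - 2 * r₀ * t)) := by
    rw [integral_Icc_eq_integral_Ioc, ← intervalIntegral.integral_of_le (by linarith),
      intervalIntegral.integral_const_mul, intervalIntegral.integral_sub
        ((by fun_prop : Continuous fun x : ℝ => √(t ^ 2 - x ^ 2)).intervalIntegrable _ _)
        intervalIntegrable_const, integral_sqrt_sq_sub_sq ht, intervalIntegral.integral_const,
      smul_eq_mul]
    ring
  suffices 2 * ENNReal.ofReal (d * (Real.pi / 2 * t ^ 2 - 2 * r₀ * t)) ≤ 2 * circChordSum Λ t by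
    exact (ENNReal.mul_le_mul_iff_right two_ne_zero ENNReal.ofNat_ne_top).1 this
  calc 2 * ENNReal.ofReal (d * (Real.pi / 2 * t ^ 2 - 2 * r₀ * t))
      = ENNReal.ofReal (∫ x in Icc (-t) t, 2 * d * (√(t ^ 2 - x ^ 2) - r₀)) := by
        rw [hint, ENNReal.ofReal_mul zero_le_two, ENNReal.ofReal_ofNat]
    _ ≤ ∫⁻ x in Icc (-t) t, ENNReal.ofReal (2 * d * (√(t ^ 2 - x ^ 2) - r₀)) :=
        ofReal_integral_le_lintegral_ofReal hcont.integrableOn_Icc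
    _ ≤ ∫⁻ x in Icc (-t) t, (Λ ∩ Icc (-√(t ^ 2 - x ^ 2)) √(t ^ 2 - x ^ 2)).encard :=
        lintegral_mono fun x => hcount _ (Real.sqrt_nonneg _)
    _ ≤ 2 * circChordSum Λ t := lintegral_encard_Icc_sqrt_le_two_mul_circChordSum Λ t

theorem ofReal_le_liminf_mul_setLIntegral_Ioc {f : ℝ → ℝ≥0∞} {κ a b : ℝ} (hκ : 0 ≤ κ)
    (hf : ∀ t > 0, ENNReal.ofReal (a * t - b) ≤ f t) :
    ENNReal.ofReal (κ * a / 2) ≤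
      liminf (fun R => ENNReal.ofReal (κ / R ^ 2) * ∫⁻ t in Ioc 0 R, f t) atTop := by
  have hlower : ∀ R > 0, ENNReal.ofReal (κ * a / 2 - κ * b / R) ≤
      ENNReal.ofReal (κ / R ^ 2) * ∫⁻ t in Ioc 0 R, f t := by
    intro R hR
    have hint : ∫ t in Ioc 0 R, (a * t - b) = a * R ^ 2 / 2 - b * R := by
      rw [← intervalIntegral.integral_of_le hR.le, intervalIntegral.integral_sub
        ((by fun_prop : Continuous fun t : ℝ => a * t).intervalIntegrable _ _)
        intervalIntegrable_const,
        intervalIntegral.integral_const_mul, integral_id, intervalIntegral.integral_const,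
        smul_eq_mul]
      ring
    calc ENNReal.ofReal (κ * a / 2 - κ * b / R)
        = ENNReal.ofReal (κ / R ^ 2) * ENNReal.ofReal (∫ t in Ioc 0 R, (a * t - b)) := by
          rw [← ENNReal.ofReal_mul (by positivity), hint]
          congr 1
          field_simp
      _ ≤ ENNReal.ofReal (κ / R ^ 2) * ∫⁻ t in Ioc 0 R, f t := by
          gcongr
          refine (ofReal_integral_le_lintegral_ofReal (by fun_prop : Continuous
            fun t : ℝ => a * t - b).integrableOn_Ioc).trans ?_
          exact setLIntegral_mono' measurableSet_Ioc fun t ht => hf t ht.1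
  have hlim : Tendsto (fun R : ℝ => ENNReal.ofReal (κ * a / 2 - κ * b / R)) atTop
      (nhds (ENNReal.ofReal (κ * a / 2))) := by
    refine (ENNReal.continuous_ofReal.tendsto _).comp ?_
    simpa using tendsto_const_nhds.sub ((tendsto_const_nhds (x := κ * b)).div_atTop tendsto_id)
  rw [← hlim.liminf_eq]
  exact liminf_le_liminf (eventually_gt_atTop 0 |>.mono hlower)

theorem exists_ofReal_le_encard_Icc_of_lt_lowerBeurlingDensity {Λ : Set ℝ} {d : NNReal}
    (hd : (d : ℝ≥0∞) < lowerBeurlingDensity Λ) :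
    ∃ r₀ : ℝ, ∀ w, ENNReal.ofReal (2 * d * (w - r₀)) ≤ (Λ ∩ Icc (-w) w).encard := by
  obtain ⟨r₁, hr₁⟩ := eventually_atTop.1 (eventually_lt_of_lt_liminf hd)
  refine ⟨max r₁ 1, fun w => ?_⟩
  rcases lt_or_ge w (max r₁ 1) with hw | hw
  · rw [ENNReal.ofReal_of_nonpos (mul_nonpos_of_nonneg_of_nonpos (by positivity) (by linarith))]
    exact bot_le
  have hw0 : 0 < 2 * w := by linarith [le_max_right r₁ 1]
  have hcentred : (d : ℝ≥0∞) < (Λ ∩ Icc (-w) w).encard / ENNReal.ofReal (2 * w) := by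
    simpa using (hr₁ w (le_of_max_le_left hw)).trans_le (iInf_le _ 0)
  rw [ENNReal.lt_div_iff_mul_lt (Or.inl (ENNReal.ofReal_pos.2 hw0).ne')
    (Or.inl ENNReal.ofReal_ne_top)] at hcentred
  refine le_trans ?_ hcentred.le
  rw [← ENNReal.ofReal_coe_nnreal, ← ENNReal.ofReal_mul d.coe_nonneg]
  exact ENNReal.ofReal_le_ofReal (by nlinarith [d.coe_nonneg, le_max_right r₁ 1])

/-- The upper average circular density dominates the lower Beurling density. -/
theorem lowerBeurlingDensity_le_circDensity (Λ : Set ℝ) :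
    lowerBeurlingDensity Λ ≤ circDensity Λ := by
  refine ENNReal.le_of_forall_nnreal_lt fun d hd => ?_
  obtain ⟨r₀, hcount⟩ := exists_ofReal_le_encard_Icc_of_lt_lowerBeurlingDensity hd
  have hchord : ∀ t > 0, ENNReal.ofReal (d * Real.pi / 2 * t - 2 * d * r₀) ≤
      circChordSum Λ t / ENNReal.ofReal t := by
    intro t ht
    rw [ENNReal.le_div_iff_mul_le (Or.inl (ENNReal.ofReal_pos.2 ht).ne')
      (Or.inl ENNReal.ofReal_ne_top), ← ENNReal.ofReal_mul' ht.le]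
    convert ofReal_le_circChordSum ht.le fun w _ => hcount w using 2
    ring
  have hav := ofReal_le_liminf_mul_setLIntegral_Ioc (κ := 4 / Real.pi) (by positivity) hchord
  simp_rw [div_div] at hav
  calc (d : ℝ≥0∞) = ENNReal.ofReal (4 / Real.pi * (d * Real.pi / 2) / 2) := by
        rw [← ENNReal.ofReal_coe_nnreal]
        congr 1
        field_simp
        ring
    _ ≤ circDensity Λ := hav.trans liminf_le_limsup
end

section
/- Let a > 0 and Λ ⊆ ℝ. Let F : ℂ → ℂ be entire, not identically zero, and suppose F(λ + i(π/a)k) = 0 for every λ ∈ Λ∖{0} and every k ∈ ℤ. Let n_F(t) = #{z ∈ ℂ : F(z) = 0, |z| ≤ t} (zeros counted without multiplicity). Then limsup_{r→∞} (1/r²) ∫₀^r n_F(t)/t dt ≥ (a/2) D⁺_circ(Λ). -/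
open MeasureTheory Filter Set
open scoped ENNReal

open Function
open scoped Topology

/-
Fix `θ > 1`. For `λ ∈ Λ \ {0}` with `|λ| ≤ t`, the zeros `λ + i(π/a)k` on the vertical line
`Re z = λ` that lie in the disc of radius `θt` number at least `(2a/π)√(t² − λ²)` once `t` is
large (the chord of the bigger disc beats the chord of the smaller one by at least `π/a`).
These lines are disjoint, so `(2a/π)` times the chord sum at `t` is at most `n_F(θt) + (2a/π)t`,
the last term accounting for `λ = 0`. Dividing by `t`, integrating, and substituting `u = θt`
gives `(a/2) D⁺_circ(Λ) ≤ θ² limsup (1/r²) ∫₀ʳ n_F(t)/t dt`, since the range of small `t`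
contributes `O(r)` because `n_F` is finite (the zeros of `F ≢ 0` are isolated). Let `θ → 1`.
-/

lemma tsum_encard_eq_encard_iUnion {ι α : Type*} {s : ι → Set α} (hs : Pairwise (Disjoint on s)) :
    ∑' i, ((s i).encard : ℝ≥0∞) = (⋃ i, s i).encard := by
  simp_rw [← ENNReal.tsum_set_one]
  rw [← ENNReal.tsum_sigma' (fun _ => 1), ← (Set.unionEqSigmaOfDisjoint hs).tsum_eq]

lemma ofReal_two_mul_sub_one_le_encard_abs_le (y : ℝ) :
    ENNReal.ofReal (2 * y - 1) ≤ {k : ℤ | |(k : ℝ)| ≤ y}.encard := by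
  rcases lt_or_ge y 0 with hy | hy
  · simp [ENNReal.ofReal_of_nonpos (by linarith : 2 * y - 1 ≤ 0)]
  set n := ⌊y⌋₊
  have hsub : ((Finset.Icc (-(n : ℤ)) n : Finset ℤ) : Set ℤ) ⊆ {k : ℤ | |(k : ℝ)| ≤ y} := by
    intro k hk
    simp only [Finset.coe_Icc, Set.mem_Icc] at hk
    have : |k| ≤ (n : ℤ) := abs_le.2 hk
    calc |(k : ℝ)| = ((|k| : ℤ) : ℝ) := by push_cast; rfl
      _ ≤ n := by exact_mod_cast this
      _ ≤ y := Nat.floor_le hy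
  calc ENNReal.ofReal (2 * y - 1) ≤ ((2 * n + 1 : ℕ) : ℝ≥0∞) := by
        rw [← ENNReal.ofReal_natCast]
        refine ENNReal.ofReal_le_ofReal ?_
        have := Nat.lt_floor_add_one y
        push_cast
        linarith
    _ = ((Finset.Icc (-(n : ℤ)) n : Finset ℤ) : Set ℤ).encard := by
        rw [Set.encard_coe_eq_coe_finsetCard, Int.card_Icc]
        norm_cast
        omega
    _ ≤ _ := by exact_mod_cast Set.encard_mono hsub

lemma add_two_mul_sqrt_sub_sq_le {c lam t s : ℝ} (hlam : |lam| ≤ t) (hts : t ≤ s) (hs : 0 < s)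
    (hgap : c * s ≤ s ^ 2 - t ^ 2) :
    c + 2 * √(t ^ 2 - lam ^ 2) ≤ 2 * √(s ^ 2 - lam ^ 2) := by
  have hlam2 : lam ^ 2 ≤ t ^ 2 := sq_le_sq' (abs_le.1 hlam).1 (abs_le.1 hlam).2
  have ht : 0 ≤ t := (abs_nonneg lam).trans hlam
  have hA := Real.sq_sqrt (sub_nonneg.2 hlam2)
  have hB := Real.sq_sqrt (sub_nonneg.2 (hlam2.trans (pow_le_pow_left₀ ht hts 2)))
  have hA0 := Real.sqrt_nonneg (t ^ 2 - lam ^ 2)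
  have hAB : √(t ^ 2 - lam ^ 2) ≤ √(s ^ 2 - lam ^ 2) := Real.sqrt_le_sqrt (by nlinarith)
  have hBs : √(s ^ 2 - lam ^ 2) ≤ s := Real.sqrt_le_iff.2 ⟨hs.le, by nlinarith [sq_nonneg lam]⟩
  -- with `A = √(t² - lam²)`, `B = √(s² - lam²)`: `(B - A) 2s ≥ (B - A)(B + A) ≥ c s`
  nlinarith [mul_le_mul_of_nonneg_left (add_le_add hBs (hAB.trans hBs)) (sub_nonneg.2 hAB)]

lemma Differentiable.finite_setOf_eq_zero_and_norm_le {F : ℂ → ℂ} (hF : Differentiable ℂ F)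
    (hF0 : F ≠ 0) (u : ℝ) : {z : ℂ | F z = 0 ∧ ‖z‖ ≤ u}.Finite := by
  have hne : ∀ᶠ z in codiscreteWithin univ, F z ≠ 0 :=
    (AnalyticOnNhd.eqOn_zero_or_eventually_ne_zero_of_preconnected (fun z _ => hF.analyticAt z)
      isPreconnected_univ).resolve_left fun h => hF0 (funext fun z => h (mem_univ z))
  refine ((isCompact_closedBall 0 u).finite_sdiff_of_mem_codiscreteWithin
    (codiscreteWithin_mono (subset_univ _) hne)).subset fun z hz => ?_
  simpa [hz.1] using hz.2

lemma ENNReal.le_of_forall_one_lt_le_ofReal_sq_mul {x y : ℝ≥0∞}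
    (h : ∀ θ : ℝ, 1 < θ → x ≤ ENNReal.ofReal (θ ^ 2) * y) : x ≤ y := by
  have hlim : Tendsto (fun θ : ℝ => ENNReal.ofReal (θ ^ 2) * y) (𝓝[>] 1) (𝓝 y) := by
    simpa using (ENNReal.Tendsto.mul_const (ENNReal.tendsto_ofReal ((continuous_pow 2).tendsto 1))
      (Or.inl (by simp))).mono_left nhdsWithin_le_nhds
  exact ge_of_tendsto hlim (eventually_nhdsWithin_of_forall h)

noncomputable def sqMean (φ : ℝ → ℝ≥0∞) (r : ℝ) : ℝ≥0∞ :=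
  ENNReal.ofReal (1 / r ^ 2) * ∫⁻ t in Ioc 0 r, φ t

lemma setLIntegral_Ioc_comp_mul {θ : ℝ} (hθ : 0 < θ) (ψ : ℝ → ℝ≥0∞) (r : ℝ) :
    ∫⁻ t in Ioc 0 r, ENNReal.ofReal θ * ψ (θ * t) = ∫⁻ u in Ioc 0 (θ * r), ψ u := by
  have he := measurableEmbedding_mulLeft₀ hθ.ne'
  have hpre : (θ * ·) ⁻¹' Ioc 0 (θ * r) = Ioc 0 r := by
    ext t
    simp [mul_pos_iff_of_pos_left hθ, mul_le_mul_iff_right₀ hθ]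
  have hmap : ∫⁻ u in Ioc 0 (θ * r), ψ u ∂(Measure.map (θ * ·) volume)
      = ∫⁻ t in Ioc 0 r, ψ (θ * t) := by
    rw [he.restrict_map, he.lintegral_map, hpre]
  rw [Real.map_volume_mul_left hθ.ne', Measure.restrict_smul, lintegral_smul_measure,
    abs_of_pos (inv_pos.2 hθ), smul_eq_mul] at hmap
  rw [lintegral_const_mul' _ _ ENNReal.ofReal_ne_top, ← hmap, ← mul_assoc,
    ← ENNReal.ofReal_mul hθ.le, mul_inv_cancel₀ hθ.ne', ENNReal.ofReal_one, one_mul]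

lemma sqMean_comp_mul {θ : ℝ} (hθ : 0 < θ) (ψ : ℝ → ℝ≥0∞) (r : ℝ) :
    sqMean (fun t => ENNReal.ofReal θ * ψ (θ * t)) r =
      ENNReal.ofReal (θ ^ 2) * sqMean ψ (θ * r) := by
  rw [sqMean, sqMean, setLIntegral_Ioc_comp_mul hθ, ← mul_assoc,
    ← ENNReal.ofReal_mul (by positivity)]
  congr 2
  rcases eq_or_ne r 0 with rfl | hr
  · simp
  · field_simp

lemma limsup_comp_const_mul_atTop {𝕜 β : Type*} [Field 𝕜] [LinearOrder 𝕜] [IsStrictOrderedRing 𝕜]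
    [ConditionallyCompleteLattice β] {θ : 𝕜} (hθ : 0 < θ) (w : 𝕜 → β) :
    limsup (fun r => w (θ * r)) atTop = limsup w atTop := by
  rw [← Function.comp_def, limsup_comp, show map (θ * ·) atTop = atTop from
    (OrderIso.mulLeft₀ θ hθ).map_atTop]

lemma tendsto_ofReal_one_div_pow_atTop {n : ℕ} (hn : n ≠ 0) :
    Tendsto (fun r : ℝ => ENNReal.ofReal (1 / r ^ n)) atTop (𝓝 0) := by
  simpa [one_div] using
    ENNReal.tendsto_ofReal (tendsto_inv_atTop_zero.comp (tendsto_pow_atTop hn))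

lemma setLIntegral_Ioc_le_of_le_comp_mul {φ ψ : ℝ → ℝ≥0∞} {θ T : ℝ} {M C : ℝ≥0∞}
    (hsmall : ∀ t ∈ Ioc 0 T, φ t ≤ M) (hlarge : ∀ t, T < t → φ t ≤ ENNReal.ofReal θ * ψ (θ * t) + C)
    (r : ℝ) :
    ∫⁻ t in Ioc 0 r, φ t ≤
      M * ENNReal.ofReal T + (∫⁻ t in Ioc 0 r, ENNReal.ofReal θ * ψ (θ * t))
        + C * ENNReal.ofReal r := by
  have hbound : ∀ t ∈ Ioc 0 r,
      φ t ≤ (Ioc 0 T).indicator (fun _ => M) t + ENNReal.ofReal θ * ψ (θ * t) + C := by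
    intro t ht
    rcases le_or_gt t T with htT | htT
    · rw [indicator_of_mem (show t ∈ Ioc 0 T from ⟨ht.1, htT⟩), add_assoc]
      exact (hsmall t ⟨ht.1, htT⟩).trans le_self_add
    · exact (hlarge t htT).trans (by gcongr; exact le_add_self)
  calc ∫⁻ t in Ioc 0 r, φ t
      ≤ ∫⁻ t in Ioc 0 r, ((Ioc 0 T).indicator (fun _ => M) t + ENNReal.ofReal θ * ψ (θ * t) + C) :=
        setLIntegral_mono' measurableSet_Ioc hbound
    _ = (∫⁻ t in Ioc 0 r, (Ioc 0 T).indicator (fun _ => M) t)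
          + (∫⁻ t in Ioc 0 r, ENNReal.ofReal θ * ψ (θ * t)) + C * ENNReal.ofReal r := by
        rw [lintegral_add_right _ measurable_const,
          lintegral_add_left (measurable_const.indicator measurableSet_Ioc), setLIntegral_const,
          Real.volume_Ioc, sub_zero]
    _ ≤ _ := by
        gcongr
        refine (setLIntegral_le_lintegral _ _).trans_eq ?_
        rw [lintegral_indicator_const measurableSet_Ioc, Real.volume_Ioc, sub_zero]

lemma limsup_sqMean_le_of_le_comp_mul {φ ψ : ℝ → ℝ≥0∞} {θ T : ℝ} {M C : ℝ≥0∞} (hθ : 0 < θ)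
    (hM : M ≠ ∞) (hC : C ≠ ∞) (hsmall : ∀ t ∈ Ioc 0 T, φ t ≤ M)
    (hlarge : ∀ t, T < t → φ t ≤ ENNReal.ofReal θ * ψ (θ * t) + C) :
    limsup (sqMean φ) atTop ≤ ENNReal.ofReal (θ ^ 2) * limsup (sqMean ψ) atTop := by
  let e : ℝ → ℝ≥0∞ := fun r =>
    ENNReal.ofReal (1 / r ^ 2) * (M * ENNReal.ofReal T) + ENNReal.ofReal (1 / r) * C
  have he : Tendsto e atTop (𝓝 0) := by
    simpa [e] using (ENNReal.Tendsto.mul_const (tendsto_ofReal_one_div_pow_atTop two_ne_zero)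
      (Or.inr (ENNReal.mul_ne_top hM ENNReal.ofReal_ne_top))).add
      (ENNReal.Tendsto.mul_const (tendsto_ofReal_one_div_pow_atTop one_ne_zero) (Or.inr hC))
  have hle : ∀ r, sqMean φ r ≤ e r + ENNReal.ofReal (θ ^ 2) * sqMean ψ (θ * r) := by
    intro r
    have hr : ENNReal.ofReal (1 / r ^ 2) * ENNReal.ofReal r = ENNReal.ofReal (1 / r) := by
      rw [← ENNReal.ofReal_mul (by positivity)]
      rcases eq_or_ne r 0 with rfl | hr
      · simp
      · field_simp
    rw [← sqMean_comp_mul hθ, sqMean, sqMean]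
    calc ENNReal.ofReal (1 / r ^ 2) * ∫⁻ t in Ioc 0 r, φ t
        ≤ ENNReal.ofReal (1 / r ^ 2) * (M * ENNReal.ofReal T
            + (∫⁻ t in Ioc 0 r, ENNReal.ofReal θ * ψ (θ * t)) + C * ENNReal.ofReal r) := by
          gcongr
          exact setLIntegral_Ioc_le_of_le_comp_mul hsmall hlarge r
      _ = _ := by
          simp only [e, ← hr]
          ring
  calc limsup (sqMean φ) atTop
      ≤ limsup (e + fun r => ENNReal.ofReal (θ ^ 2) * sqMean ψ (θ * r)) atTop :=
        limsup_le_limsup (Eventually.of_forall hle)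
    _ = ENNReal.ofReal (θ ^ 2) * limsup (sqMean ψ) atTop := by
        rw [ENNReal.limsup_add_of_left_tendsto_zero he, ENNReal.limsup_const_mul_of_ne_top
          ENNReal.ofReal_ne_top, limsup_comp_const_mul_atTop hθ]

lemma ofReal_half_mul_circDensity {a : ℝ} (ha : 0 < a) (Λ : Set ℝ) :
    ENNReal.ofReal (a / 2) * circDensity Λ = limsup (sqMean fun t =>
      ENNReal.ofReal (2 / (Real.pi / a)) * (circChordSum Λ t / ENNReal.ofReal t)) atTop := by
  rw [circDensity, ← ENNReal.limsup_const_mul_of_ne_top ENNReal.ofReal_ne_top]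
  refine congrArg (limsup · atTop) (funext fun r => ?_)
  rw [sqMean, lintegral_const_mul' _ _ ENNReal.ofReal_ne_top, ← mul_assoc, ← mul_assoc,
    ← ENNReal.ofReal_mul (by positivity), ← ENNReal.ofReal_mul (by positivity)]
  congr 2
  field_simp
  norm_num

lemma circChordSum_le_add (Λ : Set ℝ) {t : ℝ} (ht : 0 ≤ t) :
    circChordSum Λ t ≤ circChordSum (Λ \ {0}) t + ENNReal.ofReal t := by
  have hsub : Λ ∩ Icc (-t) t ⊆ (Λ \ {0}) ∩ Icc (-t) t ∪ {0} := by
    intro x hx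
    by_cases h : x = 0
    · exact Or.inr h
    · exact Or.inl ⟨⟨hx.1, h⟩, hx.2⟩
  let f : ℝ → ℝ≥0∞ := fun lam => ENNReal.ofReal √(t ^ 2 - lam ^ 2)
  calc circChordSum Λ t ≤ ∑' lam : ((Λ \ {0}) ∩ Icc (-t) t ∪ {0} : Set ℝ), f lam :=
        ENNReal.tsum_mono_subtype f hsub
    _ ≤ _ := (ENNReal.tsum_union_le f _ _).trans (by simp [f, circChordSum, Real.sqrt_sq ht])

lemma circChordSum_div_le_add_one (Λ : Set ℝ) {t : ℝ} (ht : 0 < t) :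
    circChordSum Λ t / ENNReal.ofReal t ≤ circChordSum (Λ \ {0}) t / ENNReal.ofReal t + 1 :=
  calc circChordSum Λ t / ENNReal.ofReal t
      ≤ (circChordSum (Λ \ {0}) t + ENNReal.ofReal t) / ENNReal.ofReal t := by
        gcongr
        exact circChordSum_le_add Λ ht.le
    _ ≤ _ := by
        rw [ENNReal.add_div]
        gcongr
        exact ENNReal.div_self_le_one

lemma circChordSum_le_encard_mul (Λ : Set ℝ) {t : ℝ} (ht : 0 ≤ t) :
    circChordSum Λ t ≤ (Λ ∩ Icc (-t) t).encard * ENNReal.ofReal t := by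
  rw [← ENNReal.tsum_set_const]
  refine ENNReal.tsum_le_tsum fun lam => ENNReal.ofReal_le_ofReal ?_
  rw [Real.sqrt_le_left ht]
  nlinarith [sq_nonneg (lam : ℝ)]

lemma encard_inter_Icc_le_encard_zeros {F : ℂ → ℂ} {Λ : Set ℝ} (hF : ∀ lam ∈ Λ, F lam = 0)
    (t : ℝ) : (Λ ∩ Icc (-t) t).encard ≤ {z : ℂ | F z = 0 ∧ ‖z‖ ≤ t}.encard :=
  Set.encard_le_encard_of_injOn (fun lam hlam => ⟨hF lam hlam.1, by simpa [abs_le] using hlam.2⟩)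
    Complex.ofReal_injective.injOn

lemma circChordSum_div_le_encard_zeros {F : ℂ → ℂ} {Λ : Set ℝ} (hF : ∀ lam ∈ Λ, F lam = 0)
    {t : ℝ} (ht : 0 < t) :
    circChordSum Λ t / ENNReal.ofReal t ≤ {z : ℂ | F z = 0 ∧ ‖z‖ ≤ t}.encard :=
  ENNReal.div_le_of_le_mul ((circChordSum_le_encard_mul Λ ht.le).trans
    (by gcongr; exact encard_inter_Icc_le_encard_zeros hF t))

lemma ofReal_mul_sqrt_le_encard_zeros_re_eq {F : ℂ → ℂ} {c lam t s : ℝ} (hc : 0 < c)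
    (hF : ∀ k : ℤ, F ((lam : ℂ) + Complex.I * (c : ℂ) * (k : ℂ)) = 0)
    (hlam : |lam| ≤ t) (hts : t ≤ s) (hs : 0 < s) (hgap : c * s ≤ s ^ 2 - t ^ 2) :
    ENNReal.ofReal (2 / c * √(t ^ 2 - lam ^ 2)) ≤
      {z : ℂ | F z = 0 ∧ ‖z‖ ≤ s ∧ z.re = lam}.encard := by
  set B := √(s ^ 2 - lam ^ 2)
  have hB : B ^ 2 = s ^ 2 - lam ^ 2 :=
    Real.sq_sqrt (by nlinarith [sq_le_sq' (abs_le.1 hlam).1 (abs_le.1 hlam).2])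
  have hmaps : MapsTo (fun k : ℤ => (lam : ℂ) + Complex.I * (c : ℂ) * (k : ℂ))
      {k : ℤ | |(k : ℝ)| ≤ B / c} {z : ℂ | F z = 0 ∧ ‖z‖ ≤ s ∧ z.re = lam} := by
    intro k hk
    have hck : (c * k) ^ 2 ≤ B ^ 2 := by
      rw [sq_le_sq, abs_mul, abs_of_pos hc, abs_of_nonneg (Real.sqrt_nonneg _)]
      exact (le_div_iff₀' hc).1 hk
    refine ⟨hF k, ?_, by simp⟩
    rw [← abs_norm, ← abs_of_pos hs, ← sq_le_sq, Complex.sq_norm, Complex.normSq_apply]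
    simp only [Complex.add_re, Complex.ofReal_re, Complex.mul_re, Complex.I_re, Complex.I_im,
      Complex.ofReal_im, Complex.intCast_re, Complex.intCast_im, Complex.add_im, Complex.mul_im]
    nlinarith
  have hinj : Injective fun k : ℤ => (lam : ℂ) + Complex.I * (c : ℂ) * (k : ℂ) := by
    intro k k' h
    have := congrArg Complex.im h
    simp [hc.ne'] at this
    exact_mod_cast this
  calc ENNReal.ofReal (2 / c * √(t ^ 2 - lam ^ 2)) ≤ ENNReal.ofReal (2 * (B / c) - 1) := by
        refine ENNReal.ofReal_le_ofReal ?_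
        have := add_two_mul_sqrt_sub_sq_le hlam hts hs hgap
        rw [div_mul_eq_mul_div, mul_div_assoc', le_sub_iff_add_le, div_add_one hc.ne',
          div_le_div_iff_of_pos_right hc]
        linarith
    _ ≤ _ := (ofReal_two_mul_sub_one_le_encard_abs_le _).trans
        (by exact_mod_cast Set.encard_le_encard_of_injOn hmaps hinj.injOn)

lemma ofReal_mul_circChordSum_le_encard_zeros {F : ℂ → ℂ} {Λ : Set ℝ} {c t s : ℝ} (hc : 0 < c)
    (hF : ∀ lam ∈ Λ, ∀ k : ℤ, F ((lam : ℂ) + Complex.I * (c : ℂ) * (k : ℂ)) = 0)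
    (hts : t ≤ s) (hs : 0 < s) (hgap : c * s ≤ s ^ 2 - t ^ 2) :
    ENNReal.ofReal (2 / c) * circChordSum Λ t ≤ {z : ℂ | F z = 0 ∧ ‖z‖ ≤ s}.encard := by
  let line : (Λ ∩ Icc (-t) t : Set ℝ) → Set ℂ := fun lam =>
    {z : ℂ | F z = 0 ∧ ‖z‖ ≤ s ∧ z.re = lam}
  have hdisj : Pairwise (Disjoint on line) := fun lam mu hne =>
    Set.disjoint_left.2 fun z hz hz' => hne (Subtype.ext (hz.2.2.symm.trans hz'.2.2))
  calc ENNReal.ofReal (2 / c) * circChordSum Λ t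
      = ∑' lam : (Λ ∩ Icc (-t) t : Set ℝ), ENNReal.ofReal (2 / c * √(t ^ 2 - (lam : ℝ) ^ 2)) := by
        simp_rw [circChordSum, ← ENNReal.tsum_mul_left,
          ENNReal.ofReal_mul (by positivity : 0 ≤ 2 / c)]
    _ ≤ ∑' lam, ((line lam).encard : ℝ≥0∞) := ENNReal.tsum_le_tsum fun lam =>
        ofReal_mul_sqrt_le_encard_zeros_re_eq hc (hF lam lam.2.1) (abs_le.2 lam.2.2) hts hs hgap
    _ = (⋃ lam, line lam).encard := tsum_encard_eq_encard_iUnion hdisj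
    _ ≤ _ := by
        gcongr
        exact iUnion_subset fun lam z hz => ⟨hz.1, hz.2.1⟩

lemma ofReal_mul_circChordSum_div_le_encard_zeros_mul {F : ℂ → ℂ} {Λ : Set ℝ} {c θ t : ℝ}
    (hc : 0 < c)
    (hF : ∀ lam ∈ Λ \ {0}, ∀ k : ℤ, F ((lam : ℂ) + Complex.I * (c : ℂ) * (k : ℂ)) = 0)
    (hθ : 1 < θ) (ht : θ * c / (θ ^ 2 - 1) < t) :
    ENNReal.ofReal (2 / c) * (circChordSum Λ t / ENNReal.ofReal t) ≤
      ENNReal.ofReal θ * ({z : ℂ | F z = 0 ∧ ‖z‖ ≤ θ * t}.encard / ENNReal.ofReal (θ * t))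
        + ENNReal.ofReal (2 / c) := by
  have hθ0 : 0 < θ := one_pos.trans hθ
  have ht0 : 0 < t := (div_pos (mul_pos hθ0 hc) (by nlinarith)).trans ht
  have hgap : c * (θ * t) ≤ (θ * t) ^ 2 - t ^ 2 := by
    rw [div_lt_iff₀ (by nlinarith)] at ht
    nlinarith
  calc ENNReal.ofReal (2 / c) * (circChordSum Λ t / ENNReal.ofReal t)
      ≤ ENNReal.ofReal (2 / c) * circChordSum (Λ \ {0}) t / ENNReal.ofReal t
          + ENNReal.ofReal (2 / c) := by
        rw [mul_div_assoc, ← mul_add_one]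
        gcongr
        exact circChordSum_div_le_add_one Λ ht0
    _ ≤ {z : ℂ | F z = 0 ∧ ‖z‖ ≤ θ * t}.encard / ENNReal.ofReal t + ENNReal.ofReal (2 / c) := by
        gcongr
        exact ofReal_mul_circChordSum_le_encard_zeros hc hF (by nlinarith) (by positivity) hgap
    _ = _ := by
        rw [ENNReal.ofReal_mul hθ0.le, ← mul_div_assoc, ENNReal.mul_div_mul_left _ _
          (ENNReal.ofReal_pos.2 hθ0).ne' ENNReal.ofReal_ne_top]

/-- If `F` is entire, not identically zero, and vanishes on `(Λ∖{0}) + i(π/a)ℤ`, then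
`limsup_{r→∞} (1/r²) ∫₀^r n_F(t)/t dt ≥ (a/2) D⁺_circ(Λ)`. -/
theorem circDensity_le_limsup_zero_counting (a : ℝ) (ha : 0 < a) (Λ : Set ℝ)
    (F : ℂ → ℂ) (hF : Differentiable ℂ F) (hF0 : F ≠ 0)
    (hzero : ∀ lam ∈ Λ \ {0}, ∀ k : ℤ,
      F ((lam : ℂ) + Complex.I * ((Real.pi / a : ℝ) : ℂ) * (k : ℂ)) = 0) :
    ENNReal.ofReal (a / 2) * circDensity Λ ≤
      Filter.limsup (fun r : ℝ =>
        ENNReal.ofReal (1 / r ^ 2) *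
          ∫⁻ t in Set.Ioc (0 : ℝ) r,
            (({z : ℂ | F z = 0 ∧ ‖z‖ ≤ t}.encard : ℝ≥0∞)) / ENNReal.ofReal t)
        Filter.atTop := by
  set c := Real.pi / a
  have hc : 0 < c := div_pos Real.pi_pos ha
  rw [ofReal_half_mul_circDensity ha]
  refine ENNReal.le_of_forall_one_lt_le_ofReal_sq_mul fun θ hθ => ?_
  -- for `t > T` the gap condition `c * (θ * t) ≤ (θ * t) ^ 2 - t ^ 2` holds
  set T := θ * c / (θ ^ 2 - 1)
  refine limsup_sqMean_le_of_le_comp_mul (M := ENNReal.ofReal (2 / c) *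
      ({z : ℂ | F z = 0 ∧ ‖z‖ ≤ T}.encard + 1)) (one_pos.trans hθ) ?_ ENNReal.ofReal_ne_top
    (fun t ht => ?_) (fun t ht => ofReal_mul_circChordSum_div_le_encard_zeros_mul hc hzero hθ ht)
  · exact ENNReal.mul_ne_top ENNReal.ofReal_ne_top (ENNReal.add_ne_top.2
      ⟨ENat.toENNReal_ne_top.2 (hF.finite_setOf_eq_zero_and_norm_le hF0 T).encard_lt_top.ne,
        ENNReal.one_ne_top⟩)
  · have hreal : ∀ lam ∈ Λ \ {0}, F lam = 0 := fun lam hlam => by simpa using hzero lam hlam 0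
    gcongr
    refine (circChordSum_div_le_add_one Λ ht.1).trans ?_
    gcongr
    exact (circChordSum_div_le_encard_zeros hreal ht.1).trans
      (ENat.toENNReal_le.2 (Set.encard_mono fun z hz => ⟨hz.1, hz.2.trans ht.2⟩))
end

section
/- Let f : ℝ → ℝ be differentiable and let δ ∈ ℝ, δ ≠ 0. If the zero set {x ∈ ℝ : f(x) = 0} has an accumulation point, then the zero set {x ∈ ℝ : f(x) + δ f'(x) = 0} also has an accumulation point. -/
/-! Since `(e^{x/δ} f(x))' = δ⁻¹ e^{x/δ} (f(x) + δ f'(x))`, Rolle's theorem puts a zero of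
`f + δ f'` strictly between any two zeros of `f`. An accumulation point `x₀` of the zeros of `f`
is itself a zero by continuity, so zeros of `f` arbitrarily close to `x₀` trap zeros of
`f + δ f'` between themselves and `x₀`, which therefore accumulate at `x₀` as well. -/

open Set Filter Topology

theorem exists_add_mul_deriv_eq_zero {f f' : ℝ → ℝ} {a b δ : ℝ} (hδ : δ ≠ 0) (hab : a < b)
    (hfc : ContinuousOn f (Icc a b)) (hff' : ∀ x ∈ Ioo a b, HasDerivAt f (f' x) x)
    (ha : f a = 0) (hb : f b = 0) :
    ∃ c ∈ Ioo a b, f c + δ * f' c = 0 := by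
  set F : ℝ → ℝ := fun x => Real.exp (x / δ) * f x
  have hF : ∀ x ∈ Ioo a b,
      HasDerivAt F (Real.exp (x / δ) * δ⁻¹ * (f x + δ * f' x)) x := by
    intro x hx
    refine ((((hasDerivAt_id x).div_const δ).exp).mul (hff' x hx)).congr_deriv ?_
    simp only [id]
    field_simp
  have hFc : ContinuousOn F (Icc a b) :=
    (Real.continuous_exp.comp (continuous_id.div_const δ)).continuousOn.mul hfc
  obtain ⟨c, hc, hc0⟩ := exists_hasDerivAt_eq_zero hab hFc (by simp [F, ha, hb]) hF
  refine ⟨c, hc, ?_⟩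
  simpa [Real.exp_ne_zero, hδ] using hc0

theorem IsClosed.mem_of_accPt {X : Type*} [TopologicalSpace X] {s : Set X} {x : X}
    (hs : IsClosed s) (h : AccPt x (𝓟 s)) : x ∈ s :=
  hs.closure_eq ▸ mem_closure_iff_clusterPt.mpr h.clusterPt

theorem AccPt.of_exists_mem_Ioo {s t : Set ℝ} {x : ℝ} (hx : x ∈ s)
    (hst : ∀ a ∈ s, ∀ b ∈ s, a < b → ∃ c ∈ Ioo a b, c ∈ t) (h : AccPt x (𝓟 s)) :
    AccPt x (𝓟 t) := by
  refine accPt_iff_nhds.mpr fun U hU => ?_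
  obtain ⟨ε, hε, hball⟩ := Metric.mem_nhds_iff.mp hU
  obtain ⟨y, ⟨hyball, hys⟩, hyx⟩ := accPt_iff_nhds.mp h _ (Metric.ball_mem_nhds x hε)
  have hseg : uIcc x y ⊆ U :=
    ((Real.ball_eq_Ioo x ε ▸ ordConnected_Ioo).uIcc_subset (Metric.mem_ball_self hε) hyball).trans
      hball
  rcases hyx.lt_or_gt with hyx | hxy
  · obtain ⟨c, hc, hct⟩ := hst y hys x hx hyx
    exact ⟨c, ⟨hseg (uIcc_comm x y ▸ Icc_subset_uIcc (Ioo_subset_Icc_self hc)), hct⟩, hc.2.ne⟩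
  · obtain ⟨c, hc, hct⟩ := hst x hx y hys hxy
    exact ⟨c, ⟨hseg (Icc_subset_uIcc (Ioo_subset_Icc_self hc)), hct⟩, hc.1.ne'⟩

/-- If the zero set of a differentiable `f : ℝ → ℝ` has an accumulation point and
`δ ≠ 0`, then the zero set of `f + δ f'` also has an accumulation point. -/
theorem accPt_zeroSet_add_deriv (f : ℝ → ℝ) (hf : Differentiable ℝ f)
    (δ : ℝ) (hδ : δ ≠ 0)
    (h : ∃ x₀ : ℝ, AccPt x₀ (Filter.principal {x : ℝ | f x = 0})) :
    ∃ x₀ : ℝ, AccPt x₀ (Filter.principal {x : ℝ | f x + δ * deriv f x = 0}) := by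
  obtain ⟨x₀, hx₀⟩ := h
  have hzero : f x₀ = 0 := (isClosed_eq hf.continuous continuous_const).mem_of_accPt hx₀
  refine ⟨x₀, hx₀.of_exists_mem_Ioo hzero fun a ha b hb hab => ?_⟩
  exact exists_add_mul_deriv_eq_zero hδ hab hf.continuous.continuousOn
    (fun x _ => (hf x).hasDerivAt) ha hb
end

section
/- Let f : ℝ → ℝ be differentiable and let δ ∈ ℝ, δ ≠ 0. Then D⁺_circ({x ∈ ℝ : f(x) = 0}) ≤ D⁺_circ({x ∈ ℝ : f(x) + δ f'(x) = 0}). -/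
/-!
Every zero `x ≠ 0` of `f` other than the zero nearest to the origin on its side is matched
with a zero `c` of `f + δ f'` satisfying `|c| ≤ |x|`: either `c = x`, or `f' x ≠ 0`, so `x` is
an isolated zero, and Rolle's theorem applied to `exp (y / δ) f y` on `[m, x]`, where `m` is the
previous zero of `f` towards the origin, gives `c ∈ (m, x)`. Distinct zeros get distinct
partners, since the intervals `(m, x]` are disjoint. A point closer to the origin has a longer
chord in `B_t(0)`, so the chord sum of `{f = 0}` exceeds that of `{f + δ f' = 0}` by at most
`3t` (the unmatched zeros), which disappears after the averaging `(4 / (π r²)) ∫₀^r · dt / t`.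
-/

open MeasureTheory Filter Set
open scoped ENNReal

open scoped Topology

theorem eq_of_abs_eq_of_mul_pos {α : Type*} [Ring α] [LinearOrder α] [IsStrictOrderedRing α]
    {a b : α} (h : |a| = |b|) (hab : 0 < a * b) : a = b :=
  (abs_eq_abs.1 h).resolve_right fun h' => by
    subst h'
    exact (neg_mul b b ▸ hab).not_ge (neg_nonpos.2 (mul_self_nonneg b))

theorem Set.finite_setOf_forall_mul_pos_abs_le (Λ : Set ℝ) :
    {x ∈ Λ | ∀ z ∈ Λ, 0 < z * x → |x| ≤ |z|}.Finite := by
  set N := {x ∈ Λ | ∀ z ∈ Λ, 0 < z * x → |x| ≤ |z|}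
  have hsame_side : ∀ x ∈ N, ∀ y ∈ N, 0 < x * y → x = y := fun x hx y hy hxy =>
    eq_of_abs_eq_of_mul_pos
      (le_antisymm (hx.2 y hy.1 (by rwa [mul_comm])) (hy.2 x hx.1 hxy)) hxy
  have hpos : (N ∩ Ioi 0).Subsingleton := fun x hx y hy =>
    hsame_side x hx.1 y hy.1 (mul_pos hx.2 hy.2)
  have hneg : (N ∩ Iio 0).Subsingleton := fun x hx y hy =>
    hsame_side x hx.1 y hy.1 (mul_pos_of_neg_of_neg hx.2 hy.2)
  refine ((finite_singleton 0).union (hpos.finite.union hneg.finite)).subset fun x hx => ?_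
  rcases lt_trichotomy x 0 with h | h | h
  · exact Or.inr (Or.inr ⟨hx, h⟩)
  · exact Or.inl h
  · exact Or.inr (Or.inl ⟨hx, h⟩)

section ZeroPartner

variable {f : ℝ → ℝ} {δ : ℝ}

theorem exists_mem_Ioo_add_mul_deriv_eq_zero (hδ : δ ≠ 0) {a b : ℝ} (hab : a < b)
    (hfc : ContinuousOn f (Icc a b)) (hfd : ∀ x ∈ Ioo a b, DifferentiableAt ℝ f x)
    (ha : f a = 0) (hb : f b = 0) : ∃ c ∈ Ioo a b, f c + δ * deriv f c = 0 := by
  -- Rolle's theorem for `exp (x / δ) * f x`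
  have hderiv : ∀ x ∈ Ioo a b, HasDerivAt (fun y => Real.exp (y / δ) * f y)
      (Real.exp (x / δ) / δ * (f x + δ * deriv f x)) x := by
    intro x hx
    refine (((hasDerivAt_id' x).div_const δ).exp.mul (hfd x hx).hasDerivAt).congr_deriv ?_
    field_simp
  obtain ⟨c, hc, hc0⟩ := exists_hasDerivAt_eq_zero hab
    ((Real.continuous_exp.comp (continuous_id.div_const δ)).continuousOn.mul hfc)
    (by simp [ha, hb]) hderiv
  exact ⟨c, hc, by simpa [Real.exp_ne_zero, hδ] using hc0⟩

/-- `c` lies in the gap between the zero `x` of `f` and the preceding zero of `f` on the way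
to the origin (or `c = x`). -/
def IsZeroPartner (f : ℝ → ℝ) (δ x c : ℝ) : Prop :=
  f c + δ * deriv f c = 0 ∧ 0 < c * x ∧ |c| ≤ |x| ∧
    ∀ z, f z = 0 → 0 < z * x → |z| < |x| → |z| < |c|

theorem IsZeroPartner.eq {x₁ x₂ c : ℝ} (hx₁ : f x₁ = 0) (hx₂ : f x₂ = 0)
    (h₁ : IsZeroPartner f δ x₁ c) (h₂ : IsZeroPartner f δ x₂ c) : x₁ = x₂ := by
  have hsign : 0 < x₁ * x₂ :=
    pos_of_mul_pos_right (a := c * c) (by nlinarith [mul_pos h₁.2.1 h₂.2.1]) (mul_self_nonneg c)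
  refine eq_of_abs_eq_of_mul_pos (le_antisymm ?_ ?_) hsign
  · exact not_lt.1 fun h =>
      (h₂.2.2.1.trans_lt (h₁.2.2.2 x₂ hx₂ (by rwa [mul_comm]) h)).false
  · exact not_lt.1 fun h => (h₁.2.2.1.trans_lt (h₂.2.2.2 x₁ hx₁ hsign h)).false

theorem IsZeroPartner.of_comp_neg {x c : ℝ} (h : IsZeroPartner (fun y => f (-y)) (-δ) (-x) c) :
    IsZeroPartner f δ x (-c) := by
  obtain ⟨hc, hcx, hcx', hgap⟩ := h
  refine ⟨by simpa [deriv_comp_neg] using hc, by linarith, by simpa using hcx',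
    fun z hz hzx hzx' => ?_⟩
  simpa using hgap (-z) (by simpa using hz) (by linarith) (by simpa using hzx')

theorem exists_isZeroPartner_of_pos (hf : Differentiable ℝ f) (hδ : δ ≠ 0) {x : ℝ}
    (hx0 : 0 < x) (hx : f x = 0) (hprev : ∃ z, f z = 0 ∧ 0 < z ∧ z < x) :
    ∃ c, IsZeroPartner f δ x c := by
  by_cases hgx : f x + δ * deriv f x = 0
  · exact ⟨x, hgx, mul_pos hx0 hx0, le_rfl, fun _ _ _ h => h⟩
  have hf'x : deriv f x ≠ 0 := fun h => hgx (by simp [hx, h])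
  obtain ⟨a, hax, ha⟩ : ∃ a < x, ∀ z ∈ Ioo a x, f z ≠ 0 :=
    mem_nhdsLT_iff_exists_Ioo_subset.1
      (nhdsLT_le_nhdsNE x ((hf x).hasDerivAt.eventually_ne hf'x (c := 0)))
  obtain ⟨z₀, hz₀, hz₀0, hz₀x⟩ := hprev
  -- the last zero `m` of `f` in `(0, x)`
  set K := {z | f z = 0} ∩ Icc 0 a
  have hK : IsCompact K := isCompact_Icc.inter_left (isClosed_eq hf.continuous continuous_const)
  have hle_a : ∀ z, f z = 0 → z < x → z ≤ a := fun z hz hzx =>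
    not_lt.1 fun h => ha z ⟨h, hzx⟩ hz
  have hz₀K : z₀ ∈ K := ⟨hz₀, hz₀0.le, hle_a z₀ hz₀ hz₀x⟩
  obtain ⟨m, ⟨hm, -, hma⟩, hmax⟩ := hK.exists_isGreatest ⟨z₀, hz₀K⟩
  obtain ⟨c, ⟨hmc, hcx⟩, hc⟩ := exists_mem_Ioo_add_mul_deriv_eq_zero hδ (hma.trans_lt hax)
    hf.continuous.continuousOn (fun y _ => hf y) hm hx
  have hc0 : 0 < c := hz₀0.trans_le ((hmax hz₀K).trans hmc.le)
  refine ⟨c, hc, mul_pos hc0 hx0, by simp only [abs_of_pos hc0, abs_of_pos hx0, hcx.le],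
    fun z hz hzx hzx' => ?_⟩
  have hz0 : 0 < z := pos_of_mul_pos_left hzx hx0.le
  rw [abs_of_pos hx0, abs_of_pos hz0] at hzx'
  rw [abs_of_pos hz0, abs_of_pos hc0]
  exact (hmax ⟨hz, hz0.le, hle_a z hz hzx'⟩).trans_lt hmc

theorem exists_isZeroPartner (hf : Differentiable ℝ f) (hδ : δ ≠ 0) {x : ℝ} (hx : f x = 0)
    (hprev : ∃ z, f z = 0 ∧ 0 < z * x ∧ |z| < |x|) : ∃ c, IsZeroPartner f δ x c := by
  obtain ⟨z, hz, hzx, hzx'⟩ := hprev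
  rcases lt_trichotomy x 0 with hx0 | rfl | hx0
  · have hz0 : z < 0 := neg_of_mul_pos_left hzx hx0.le
    rw [abs_of_neg hx0, abs_of_neg hz0] at hzx'
    obtain ⟨c, hc⟩ := exists_isZeroPartner_of_pos (f := fun y => f (-y))
      (hf.comp differentiable_neg) (neg_ne_zero.2 hδ) (neg_pos.2 hx0) (by simpa using hx)
      ⟨-z, by simpa using hz, by linarith, by linarith⟩
    exact ⟨-c, hc.of_comp_neg⟩
  · simp at hzx
  · have hz0 : 0 < z := pos_of_mul_pos_left hzx hx0.le
    rw [abs_of_pos hx0, abs_of_pos hz0] at hzx'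
    exact exists_isZeroPartner_of_pos hf hδ hx0 hx ⟨z, hz, hz0, hzx'⟩

theorem exists_injOn_zeroSet_add_deriv (hf : Differentiable ℝ f) (hδ : δ ≠ 0) :
    ∃ S : Finset ℝ, ∃ φ : ℝ → ℝ, InjOn φ ({x | f x = 0} \ S) ∧
      ∀ x ∈ {x | f x = 0} \ S, f (φ x) + δ * deriv f (φ x) = 0 ∧ |φ x| ≤ |x| := by
  have hN := finite_setOf_forall_mul_pos_abs_le {x | f x = 0}
  have hex : ∀ x ∈ {x | f x = 0} \ hN.toFinset, ∃ c, IsZeroPartner f δ x c := by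
    rintro x ⟨hx, hxN⟩
    refine exists_isZeroPartner hf hδ hx ?_
    by_contra! hinnermost
    exact hxN (Finset.mem_coe.2 (hN.mem_toFinset.2 ⟨hx, hinnermost⟩))
  choose! φ hφ using hex
  exact ⟨hN.toFinset, φ, fun x hx y hy hxy => (hφ x hx).eq hx.1 hy.1 (hxy ▸ hφ y hy),
    fun x hx => ⟨(hφ x hx).1, (hφ x hx).2.2.1⟩⟩

end ZeroPartner

theorem circChordSum_le_of_injOn {Λ Λ' : Set ℝ} (S : Finset ℝ) {φ : ℝ → ℝ}
    (hφ : InjOn φ (Λ \ S)) (hmaps : ∀ x ∈ Λ \ S, φ x ∈ Λ' ∧ |φ x| ≤ |x|) {t : ℝ}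
    (ht : 0 ≤ t) :
    circChordSum Λ t ≤ circChordSum Λ' t + S.card * ENNReal.ofReal t := by
  set chord : ℝ → ℝ≥0∞ := fun x => ENNReal.ofReal √(t ^ 2 - x ^ 2)
  have chord_le : ∀ x, chord x ≤ ENNReal.ofReal t := fun x => ENNReal.ofReal_le_ofReal <|
    Real.sqrt_le_iff.2 ⟨ht, by nlinarith [sq_nonneg x]⟩
  have chord_anti : ∀ x y, |y| ≤ |x| → chord x ≤ chord y := fun x y h =>
    ENNReal.ofReal_le_ofReal <| Real.sqrt_le_sqrt <| by nlinarith [sq_le_sq.2 h]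
  set A := (Λ \ S) ∩ Icc (-t) t
  have hφA : φ '' A ⊆ Λ' ∩ Icc (-t) t := by
    rintro _ ⟨x, ⟨hxΛ, hxt⟩, rfl⟩
    exact ⟨(hmaps x hxΛ).1, abs_le.1 ((hmaps x hxΛ).2.trans (abs_le.2 hxt))⟩
  have hA : ∑' x : A, chord x ≤ circChordSum Λ' t :=
    calc ∑' x : A, chord x ≤ ∑' x : A, chord (φ x) :=
          ENNReal.tsum_le_tsum fun x => chord_anti _ _ (hmaps x x.2.1).2
      _ = ∑' y : φ '' A, chord y := (tsum_image chord (hφ.mono inter_subset_left)).symm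
      _ ≤ circChordSum Λ' t := ENNReal.tsum_mono_subtype chord hφA
  have hS : ∑' x : (S : Set ℝ), chord x ≤ S.card * ENNReal.ofReal t := by
    rw [Finset.tsum_subtype' S chord, ← nsmul_eq_mul]
    exact Finset.sum_le_card_nsmul S chord _ fun x _ => chord_le x
  calc circChordSum Λ t ≤ ∑' x : ↑(A ∪ S), chord x :=
        ENNReal.tsum_mono_subtype chord fun x ⟨hxΛ, hxt⟩ => by
          by_cases hxS : x ∈ (S : Set ℝ)
          exacts [Or.inr hxS, Or.inl ⟨⟨hxΛ, hxS⟩, hxt⟩]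
    _ ≤ ∑' x : A, chord x + ∑' x : (S : Set ℝ), chord x := ENNReal.tsum_union_le chord A S
    _ ≤ circChordSum Λ' t + S.card * ENNReal.ofReal t := add_le_add hA hS

theorem setLIntegral_circChordSum_div_le {Λ Λ' : Set ℝ} {C : ℝ≥0∞}
    (h : ∀ t > 0, circChordSum Λ t ≤ circChordSum Λ' t + C * ENNReal.ofReal t) (r : ℝ) :
    ∫⁻ t in Ioc 0 r, circChordSum Λ t / ENNReal.ofReal t ≤
      (∫⁻ t in Ioc 0 r, circChordSum Λ' t / ENNReal.ofReal t) + C * ENNReal.ofReal r := by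
  calc ∫⁻ t in Ioc 0 r, circChordSum Λ t / ENNReal.ofReal t
      ≤ ∫⁻ t in Ioc 0 r, (circChordSum Λ' t / ENNReal.ofReal t + C) := by
        refine setLIntegral_mono' measurableSet_Ioc fun t ht => ?_
        have hpos : ENNReal.ofReal t ≠ 0 := ENNReal.ofReal_ne_zero_iff.2 ht.1
        calc circChordSum Λ t / ENNReal.ofReal t
            ≤ (circChordSum Λ' t + C * ENNReal.ofReal t) / ENNReal.ofReal t := by
              gcongr
              exact h t ht.1
          _ = circChordSum Λ' t / ENNReal.ofReal t + C := by
            rw [ENNReal.add_div, ENNReal.mul_div_cancel_right hpos ENNReal.ofReal_ne_top]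
    _ = (∫⁻ t in Ioc 0 r, circChordSum Λ' t / ENNReal.ofReal t) + C * ENNReal.ofReal r := by
        rw [lintegral_add_right _ measurable_const, setLIntegral_const, Real.volume_Ioc, sub_zero]

theorem circDensity_le_of_circChordSum_le {Λ Λ' : Set ℝ} {C : ℝ≥0∞} (hC : C ≠ ∞)
    (h : ∀ t > 0, circChordSum Λ t ≤ circChordSum Λ' t + C * ENNReal.ofReal t) :
    circDensity Λ ≤ circDensity Λ' := by
  set error : ℝ → ℝ≥0∞ := fun r =>
    ENNReal.ofReal (4 / (Real.pi * r ^ 2)) * (C * ENNReal.ofReal r)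
  have herror : Tendsto error atTop (𝓝 0) := by
    have hlim : Tendsto (fun r => C * ENNReal.ofReal (4 / (Real.pi * r))) atTop (𝓝 0) := by
      simpa using ENNReal.Tendsto.const_mul (ENNReal.tendsto_ofReal
        (tendsto_const_nhds.div_atTop (tendsto_id.const_mul_atTop Real.pi_pos)))
        (Or.inr hC)
    refine hlim.congr' ((eventually_gt_atTop 0).mono fun r hr => ?_)
    simp only [error]
    rw [mul_left_comm, ← ENNReal.ofReal_mul (by positivity)]
    congr 2
    field_simp
  calc circDensity Λ
      ≤ limsup (fun r => ENNReal.ofReal (4 / (Real.pi * r ^ 2)) *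
          (∫⁻ t in Ioc 0 r, circChordSum Λ' t / ENNReal.ofReal t) + error r) atTop :=
        limsup_le_limsup (Eventually.of_forall fun r => by
          simpa only [error, ← mul_add] using
            mul_le_mul_right (setLIntegral_circChordSum_div_le h r) _)
    _ = circDensity Λ' := ENNReal.limsup_add_of_right_tendsto_zero herror _

/-- For differentiable `f : ℝ → ℝ` and `δ ≠ 0`,
`D⁺_circ({f = 0}) ≤ D⁺_circ({f + δ f' = 0})`. -/
theorem circDensity_zeroSet_le_circDensity_zeroSet_add_deriv
    (f : ℝ → ℝ) (hf : Differentiable ℝ f) (δ : ℝ) (hδ : δ ≠ 0) :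
    circDensity {x : ℝ | f x = 0} ≤ circDensity {x : ℝ | f x + δ * deriv f x = 0} := by
  obtain ⟨S, φ, hφ, hmaps⟩ := exists_injOn_zeroSet_add_deriv hf hδ
  exact circDensity_le_of_circChordSum_le (ENNReal.natCast_ne_top S.card) fun t ht =>
    circChordSum_le_of_injOn S hφ hmaps ht.le
end

section
/- Let α > 0 and ε ∈ (0,1). There exists a constant C = C_{α,ε} > 0 such that for every t ≥ C and every set Λ' ⊆ ℝ with 0 ∉ Λ' and no accumulation points, ∑_{λ ∈ Λ'∩[−t,t]} (2/α)√(t²−λ²) ≤ #((Λ' × αℤ) ∩ B_{(1+ε)t}(0)), where B_s(0) is the open Euclidean disk of radius s centered at the origin of ℝ². -/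
open Set
open scoped ENNReal

/-! For each `λ ∈ Λ' ∩ [-t, t]` the vertical line through `λ` meets the disc of radius `t` in a
chord of half-length `√(t² - λ²)`. Thickening that chord by `α ≤ εt` at both ends keeps it inside the
disc of radius `(1 + ε)t`, and the thickened chord contains at least `(2/α)√(t² - λ²)` points of
`αℤ`. Summing over the vertical lines counts disjoint sets of lattice points of the disc. -/

lemma encard_eq_tsum_encard_preimage_prodMk {X Y : Type*} (S : Set (X × Y)) :
    (S.encard : ℝ≥0∞) = ∑' x, ((Prod.mk x ⁻¹' S).encard : ℝ≥0∞) := by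
  simp only [← ENNReal.tsum_set_one, tsum_subtype _ fun _ => (1 : ℝ≥0∞)]
  exact ENNReal.tsum_prod'

lemma ofReal_two_div_mul_le_encard_mul_int_abs_lt {α s : ℝ} (hα : 0 < α) (hs : 0 ≤ s) :
    ENNReal.ofReal (2 / α * s) ≤
      ({y : ℝ | (∃ k : ℤ, y = α * k) ∧ |y| < s + α}.encard : ℝ≥0∞) := by
  set n : ℕ := ⌈s / α⌉₊
  have hn : α * n < s + α := by
    have := Nat.ceil_lt_add_one (div_nonneg hs hα.le)
    rwa [← mul_lt_mul_iff_right₀ hα, mul_add, mul_div_cancel₀ _ hα.ne', mul_one] at this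
  have hsub : (fun k : ℤ => α * k) '' Icc (-(n : ℤ)) n ⊆
      {y : ℝ | (∃ k : ℤ, y = α * k) ∧ |y| < s + α} := by
    rintro _ ⟨k, hk, rfl⟩
    have hk : |(k : ℝ)| ≤ n := by exact_mod_cast abs_le.mpr hk
    refine ⟨⟨k, rfl⟩, ?_⟩
    calc |α * k| = α * |(k : ℝ)| := by rw [abs_mul, abs_of_pos hα]
      _ ≤ α * n := by gcongr
      _ < s + α := hn
  have hinj : Function.Injective (fun k : ℤ => α * k) := fun k l hkl => by
    exact_mod_cast mul_left_cancel₀ hα.ne' hkl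
  have hcard : (Icc (-(n : ℤ)) n).encard = (2 * n + 1 : ℕ) := by
    rw [← Finset.coe_Icc, encard_coe_eq_coe_finsetCard, Int.card_Icc]
    congr 1
    omega
  calc ENNReal.ofReal (2 / α * s) ≤ ((2 * n + 1 : ℕ) : ℝ≥0∞) := by
        rw [← ENNReal.ofReal_natCast]
        gcongr
        push_cast
        have := Nat.le_ceil (s / α)
        linarith [show 2 / α * s = 2 * (s / α) by ring]
    _ = ((Icc (-(n : ℤ)) n).encard : ℝ≥0∞) := by rw [hcard]; rfl
    _ = (((fun k : ℤ => α * k) '' Icc (-(n : ℤ)) n).encard : ℝ≥0∞) := by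
        rw [hinj.encard_image]
    _ ≤ _ := by gcongr

lemma sq_add_sq_lt_sq_add_of_abs_lt_sqrt_add {x y t δ : ℝ} (hx : |x| ≤ t) (hδ : 0 ≤ δ)
    (hy : |y| < √(t ^ 2 - x ^ 2) + δ) : x ^ 2 + y ^ 2 < (t + δ) ^ 2 := by
  have hxt : x ^ 2 ≤ t ^ 2 := sq_le_sq' (abs_le.mp hx).1 (abs_le.mp hx).2
  have hs_sq : √(t ^ 2 - x ^ 2) ^ 2 = t ^ 2 - x ^ 2 := Real.sq_sqrt (by linarith)
  have hs_le : √(t ^ 2 - x ^ 2) ≤ t :=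
    Real.sqrt_le_iff.mpr ⟨(abs_nonneg x).trans hx, by linarith [sq_nonneg x]⟩
  have hy_sq : y ^ 2 < (√(t ^ 2 - x ^ 2) + δ) ^ 2 := by
    rw [← sq_abs y]
    exact pow_lt_pow_left₀ hy (abs_nonneg y) two_ne_zero
  nlinarith [mul_le_mul_of_nonneg_left hs_le hδ]

/-- For `α > 0`, `ε ∈ (0,1)`, there is `C > 0` such that for every `t ≥ C` and every
`Λ' ⊆ ℝ∖{0}` without accumulation points,
`∑_{λ ∈ Λ'∩[−t,t]} (2/α)√(t²−λ²) ≤ #((Λ' × αℤ) ∩ B_{(1+ε)t}(0))`. -/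
theorem chordSum_le_count_of_dilate (α ε : ℝ) (hα : 0 < α) (hε : ε ∈ Set.Ioo (0 : ℝ) 1) :
    ∃ C : ℝ, 0 < C ∧ ∀ t : ℝ, C ≤ t → ∀ Λ' : Set ℝ, 0 ∉ Λ' →
      (∀ R : ℝ, 0 < R → (Λ' ∩ Set.Icc (-R) R).Finite) →
      (∑' lam : (Λ' ∩ Set.Icc (-t) t : Set ℝ),
          ENNReal.ofReal ((2 / α) * Real.sqrt (t ^ 2 - (lam : ℝ) ^ 2)))
        ≤ ({p : ℝ × ℝ | p.1 ∈ Λ' ∧ (∃ k : ℤ, p.2 = α * k) ∧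
              p.1 ^ 2 + p.2 ^ 2 < ((1 + ε) * t) ^ 2}.encard : ℝ≥0∞) := by
  have hε0 := hε.1
  refine ⟨α / ε, by positivity, fun t ht Λ' _ _ => ?_⟩
  have hαt : α ≤ ε * t := by rwa [div_le_iff₀ hε0, mul_comm] at ht
  set S := {p : ℝ × ℝ | p.1 ∈ Λ' ∧ (∃ k : ℤ, p.2 = α * k) ∧ p.1 ^ 2 + p.2 ^ 2 < ((1 + ε) * t) ^ 2}
  have hchord : ∀ lam : (Λ' ∩ Icc (-t) t : Set ℝ),
      ENNReal.ofReal (2 / α * √(t ^ 2 - (lam : ℝ) ^ 2)) ≤ (Prod.mk (lam : ℝ) ⁻¹' S).encard := by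
    rintro ⟨lam, hΛ, hlam⟩
    refine (ofReal_two_div_mul_le_encard_mul_int_abs_lt hα (Real.sqrt_nonneg _)).trans ?_
    gcongr
    rintro y ⟨hk, hy⟩
    refine ⟨hΛ, hk, ?_⟩
    have := sq_add_sq_lt_sq_add_of_abs_lt_sqrt_add (abs_le.mpr hlam)
      (hα.le.trans hαt) (hy.trans_le (by gcongr))
    rwa [← one_add_mul] at this
  calc _ ≤ ∑' lam : (Λ' ∩ Icc (-t) t : Set ℝ), ((Prod.mk (lam : ℝ) ⁻¹' S).encard : ℝ≥0∞) :=
        ENNReal.tsum_le_tsum hchord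
    _ ≤ ∑' lam, ((Prod.mk lam ⁻¹' S).encard : ℝ≥0∞) :=
        ENNReal.tsum_comp_le_tsum_of_injective Subtype.val_injective _
    _ = S.encard := (encard_eq_tsum_encard_preimage_prodMk S).symm
end
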